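/- arXiv:1802.07123 — 8 statements merged into one kernel-verified Lean document; each statement's English description precedes it below -/
import Mathlib

section
/- The width of the full shift k^Γ equals log₂ k, and for every closed proper subset X ⊊ k^Γ, the width of X is strictly less than log₂ k. -/
open scoped ENNReal

/-- A nonempty finite partial function `Γ ⇀ k`, determining a basic open set. -/
structure Pattern (Γ : Type*) (k : ℕ) where
  dom : Finset Γ
  dom_nonempty : dom.Nonempty
  val : Γ → Fin k

namespace Pattern

variable {Γ : Type*} {k : ℕ}

/-- The basic open set `U_φ = {x : x ⊇ φ}`. -/
def cylinder (φ : Pattern Γ k) : Set (Γ → Fin k) := {x | ∀ g ∈ φ.dom, x g = φ.val g}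

/-- `d(U_φ) = 2^{-|dom φ|}`, as an extended nonnegative real. -/
noncomputable def dE (φ : Pattern Γ k) : ℝ≥0∞ := 2⁻¹ ^ φ.dom.card

/-- `d(U_φ) = 2^{-|dom φ|}`, as a real number. -/
noncomputable def dR (φ : Pattern Γ k) : ℝ := (2 : ℝ)⁻¹ ^ φ.dom.card

end Pattern

/-- `𝒰` is a cover of `X` by basic open sets. -/
def IsCover {Γ : Type*} {k : ℕ} (𝒰 : Set (Pattern Γ k)) (X : Set (Γ → Fin k)) : Prop :=
  X ⊆ ⋃ φ ∈ 𝒰, φ.cylinder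

/-- `𝔴(𝒰) = inf {h ∈ [0,∞) : Σ_{U ∈ 𝒰} d(U)^h ≤ 1}` (the infimum of the empty set being `∞`). -/
noncomputable def famWidth {Γ : Type*} {k : ℕ} (𝒰 : Set (Pattern Γ k)) : ℝ≥0∞ :=
  sInf {w : ℝ≥0∞ | ∃ h : ℝ, 0 ≤ h ∧ w = ENNReal.ofReal h ∧
    ∑' φ : 𝒰, (φ : Pattern Γ k).dE ^ h ≤ 1}

/-- The width `𝔴(X)`: the infimum of `𝔴(𝒰)` over covers `𝒰` of `X` by basic open sets. -/
noncomputable def width {Γ : Type*} {k : ℕ} (X : Set (Γ → Fin k)) : ℝ≥0∞ :=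
  ⨅ (𝒰 : Set (Pattern Γ k)) (_ : IsCover 𝒰 X), famWidth 𝒰

section Group

variable {Γ : Type*} [Group Γ] {k : ℕ}

/-- The left shift action: `(γ · x)(δ) = x(δγ)`. -/
def lshift (γ : Γ) (x : Γ → Fin k) : Γ → Fin k := fun δ => x (δ * γ)

/-- The right shift action: `(x · γ)(δ) = x(γδ)`. -/
def rshift (γ : Γ) (x : Γ → Fin k) : Γ → Fin k := fun δ => x (γ * δ)

/-- The left shift orbit `Γ · x`. -/
def leftOrbit (x : Γ → Fin k) : Set (Γ → Fin k) := Set.range fun γ => lshift γ x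

/-- The right shift orbit `x · Γ`. -/
def rightOrbit (x : Γ → Fin k) : Set (Γ → Fin k) := Set.range fun γ => rshift γ x

/-- The pointwise width `𝔴*(X) = inf_{x ∈ X} min(𝔴(cl(Γ·x)), 𝔴(cl(x·Γ)))`. -/
noncomputable def pwWidth (X : Set (Γ → Fin k)) : ℝ≥0∞ :=
  ⨅ x ∈ X, min (width (closure (leftOrbit x))) (width (closure (rightOrbit x)))

/-- Invariance under the left shift action. -/
def ShiftInvariant (X : Set (Γ → Fin k)) : Prop := ∀ γ : Γ, ∀ x ∈ X, lshift γ x ∈ X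

/-- The action of `Γ` on patterns: `dom(γ·φ) = dom(φ)γ⁻¹`, `(γ·φ)(δ) = φ(δγ)`,
so that `γ · U_φ = U_{γ·φ}`. -/
def patShift [DecidableEq Γ] (γ : Γ) (φ : Pattern Γ k) : Pattern Γ k where
  dom := φ.dom.image (· * γ⁻¹)
  dom_nonempty := φ.dom_nonempty.image _
  val := fun δ => φ.val (δ * γ)

end Group



section Aux

variable {Γ : Type*} {k : ℕ}

lemma WAux.cylinder_isOpen (φ : Pattern Γ k) : IsOpen φ.cylinder := by
  have : φ.cylinder = ⋂ g ∈ φ.dom, (fun x : Γ → Fin k => x g) ⁻¹' {φ.val g} := by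
    ext x; simp [Pattern.cylinder]
  rw [this]
  exact isOpen_biInter_finset fun g _ =>
    (continuous_apply g).isOpen_preimage _ (isOpen_discrete _)

/-- counting lemma over a finite cover -/
lemma WAux.count_le [DecidableEq Γ] (hk : 0 < k) (t : Finset (Pattern Γ k))
    (hcov : ∀ x : Γ → Fin k, ∃ φ ∈ t, x ∈ φ.cylinder) :
    k ^ (t.sup Pattern.dom).card ≤
      ∑ φ ∈ t, k ^ ((t.sup Pattern.dom).card - φ.dom.card) := by
  classical
  set S := t.sup Pattern.dom with hS
  have hdom : ∀ φ ∈ t, φ.dom ⊆ S := fun φ hφ => Finset.le_sup hφ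
  let ext : (↥S → Fin k) → Γ → Fin k :=
    fun f g => if h : g ∈ S then f ⟨g, h⟩ else ⟨0, hk⟩
  let B : Pattern Γ k → Finset (↥S → Fin k) := fun φ =>
    Finset.univ.filter fun f => ∀ g : ↥S, (g : Γ) ∈ φ.dom → f g = φ.val g
  have hcover : (Finset.univ : Finset (↥S → Fin k)) ⊆ t.biUnion B := by
    intro f _
    obtain ⟨φ, hφt, hφc⟩ := hcov (ext f)
    refine Finset.mem_biUnion.mpr ⟨φ, hφt, Finset.mem_filter.mpr ⟨Finset.mem_univ _, ?_⟩⟩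
    intro g hg
    have h1 : ext f (g : Γ) = φ.val g := hφc (g : Γ) hg
    have h2 : ext f (g : Γ) = f g := by
      simp only [ext, dif_pos g.2]
    rw [← h2, h1]
  have hB : ∀ φ ∈ t, (B φ).card ≤ k ^ (S.card - φ.dom.card) := by
    intro φ hφ
    have : (B φ).card ≤ (Finset.univ : Finset (↥(S \ φ.dom) → Fin k)).card := by
      refine Finset.card_le_card_of_injOn
        (fun f (g : ↥(S \ φ.dom)) => f ⟨(g : Γ), (Finset.mem_sdiff.mp g.2).1⟩)
        (fun _ _ => Finset.mem_univ _) ?_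
      intro f₁ h₁ f₂ h₂ hf
      simp only [Finset.coe_filter, Set.mem_setOf_eq, B, Finset.mem_filter] at h₁ h₂
      funext g
      by_cases hg : (g : Γ) ∈ φ.dom
      · rw [h₁.2 g hg, h₂.2 g hg]
      · have hmem : (g : Γ) ∈ S \ φ.dom := Finset.mem_sdiff.mpr ⟨g.2, hg⟩
        have := congrFun hf ⟨(g : Γ), hmem⟩
        simpa using this
    calc (B φ).card ≤ (Finset.univ : Finset (↥(S \ φ.dom) → Fin k)).card := this
      _ = k ^ (S.card - φ.dom.card) := by
          rw [Finset.card_univ, Fintype.card_fun, Fintype.card_coe, Fintype.card_fin,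
            Finset.card_sdiff_of_subset (hdom φ hφ)]
  calc k ^ S.card = (Finset.univ : Finset (↥S → Fin k)).card := by
        rw [Finset.card_univ, Fintype.card_fun, Fintype.card_coe, Fintype.card_fin]
    _ ≤ (t.biUnion B).card := Finset.card_le_card hcover
    _ ≤ ∑ φ ∈ t, (B φ).card := Finset.card_biUnion_le
    _ ≤ ∑ φ ∈ t, k ^ (S.card - φ.dom.card) := Finset.sum_le_sum hB

lemma WAux.real_sum_ge [DecidableEq Γ] (hk : 0 < k) (t : Finset (Pattern Γ k))
    (hcov : ∀ x : Γ → Fin k, ∃ φ ∈ t, x ∈ φ.cylinder) :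
    (1 : ℝ) ≤ ∑ φ ∈ t, ((k : ℝ))⁻¹ ^ φ.dom.card := by
  classical
  set S := t.sup Pattern.dom with hS
  have hdom : ∀ φ ∈ t, φ.dom ⊆ S := fun φ hφ => Finset.le_sup hφ
  have hcount := WAux.count_le hk t hcov
  have hkR : (0 : ℝ) < (k : ℝ) ^ S.card := by positivity
  have hkne : (k : ℝ) ≠ 0 := by positivity
  have hcast : (k : ℝ) ^ S.card ≤ ∑ φ ∈ t, (k : ℝ) ^ (S.card - φ.dom.card) := by
    exact_mod_cast hcount
  have hterm : ∀ φ ∈ t, (k : ℝ) ^ (S.card - φ.dom.card)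
      = (k : ℝ) ^ S.card * ((k : ℝ))⁻¹ ^ φ.dom.card := by
    intro φ hφ
    rw [pow_sub₀ _ hkne (Finset.card_le_card (hdom φ hφ)), inv_pow]
  rw [Finset.sum_congr rfl hterm, ← Finset.mul_sum] at hcast
  exact le_of_mul_le_mul_left (by rw [mul_one]; exact hcast) hkR

end Aux

section Aux2

variable {Γ : Type*} {k : ℕ}

lemma WAux.dE_rpow (φ : Pattern Γ k) {h : ℝ} :
    φ.dE ^ h = ENNReal.ofReal (((2 : ℝ)⁻¹ ^ φ.dom.card) ^ h) := by
  have h2 : (2⁻¹ : ℝ≥0∞) = ENNReal.ofReal ((2 : ℝ)⁻¹) := by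
    rw [ENNReal.ofReal_inv_of_pos (by norm_num), ENNReal.ofReal_ofNat]
  rw [Pattern.dE, h2, ← ENNReal.ofReal_pow (by norm_num),
    ENNReal.ofReal_rpow_of_pos (by positivity)]

lemma WAux.term_lt (hk : 2 ≤ k) {n : ℕ} (hn : 1 ≤ n) {h : ℝ} (h0 : 0 ≤ h)
    (hlt : h < Real.logb 2 k) :
    ((k : ℝ))⁻¹ ^ n < ((2 : ℝ)⁻¹ ^ n) ^ h := by
  have hkpos : (0 : ℝ) < (k : ℝ) := by positivity
  have hklog : (2 : ℝ) ^ Real.logb 2 (k : ℝ) = (k : ℝ) :=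
    Real.rpow_logb (by norm_num) (by norm_num) hkpos
  have hL : (2 : ℝ) ^ (Real.logb 2 (k : ℝ) * (-(n : ℝ))) = ((k : ℝ))⁻¹ ^ n := by
    rw [Real.rpow_mul (by norm_num : (0:ℝ) ≤ 2), hklog, Real.rpow_neg hkpos.le,
      Real.rpow_natCast, inv_pow]
  have e2 : ((2 : ℝ)⁻¹) ^ n = (2 : ℝ) ^ (-(n : ℝ)) := by
    rw [Real.rpow_neg (by norm_num : (0:ℝ) ≤ 2), Real.rpow_natCast, inv_pow]
  have hR : ((2 : ℝ)⁻¹ ^ n) ^ h = (2 : ℝ) ^ ((-(n : ℝ)) * h) := by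
    rw [e2, ← Real.rpow_mul (by norm_num : (0:ℝ) ≤ 2)]
  rw [← hL, hR, Real.rpow_lt_rpow_left_iff (by norm_num : (1:ℝ) < 2)]
  have hnR : (1 : ℝ) ≤ (n : ℝ) := by exact_mod_cast hn
  nlinarith

lemma WAux.halfpow {m : ℕ} {K h₀ : ℝ} (hKpos : 0 < K)
    (hmul : (m : ℝ) * h₀ = Real.logb 2 K) :
    ((2 : ℝ)⁻¹ ^ m) ^ h₀ = K⁻¹ := by
  rw [← Real.rpow_natCast (2:ℝ)⁻¹ m, ← Real.rpow_mul (by norm_num),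
    Real.inv_rpow (by norm_num), hmul,
    Real.rpow_logb (by norm_num) (by norm_num) hKpos]

lemma WAux.logb_le (hk : 2 ≤ k) {𝒰 : Set (Pattern Γ k)}
    (hcov : IsCover 𝒰 Set.univ) {h : ℝ} (h0 : 0 ≤ h)
    (hsum : ∑' φ : 𝒰, (φ : Pattern Γ k).dE ^ h ≤ 1) :
    Real.logb 2 (k : ℝ) ≤ h := by
  classical
  by_contra hcon
  push_neg at hcon
  have hopen : ∀ i : 𝒰, IsOpen (i : Pattern Γ k).cylinder := fun i =>
    WAux.cylinder_isOpen _
  have hcov' : (Set.univ : Set (Γ → Fin k)) ⊆ ⋃ i : 𝒰, (i : Pattern Γ k).cylinder := by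
    intro x hx
    obtain ⟨φ, hφ, hxφ⟩ := Set.mem_iUnion₂.mp (hcov (Set.mem_univ x))
    exact Set.mem_iUnion.mpr ⟨⟨φ, hφ⟩, hxφ⟩
  obtain ⟨t, ht⟩ := isCompact_univ.elim_finite_subcover _ hopen hcov'
  set t' : Finset (Pattern Γ k) := t.image Subtype.val with ht'
  have hcov'' : ∀ x : Γ → Fin k, ∃ φ ∈ t', x ∈ φ.cylinder := by
    intro x
    obtain ⟨i, hit, hxi⟩ := Set.mem_iUnion₂.mp (ht (Set.mem_univ x))
    exact ⟨(i : Pattern Γ k), Finset.mem_image_of_mem _ hit, hxi⟩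
  have h1 : (1 : ℝ) ≤ ∑ φ ∈ t', ((k : ℝ))⁻¹ ^ φ.dom.card :=
    WAux.real_sum_ge (by omega) t' hcov''
  have htne : t'.Nonempty := by
    obtain ⟨φ, hφ, _⟩ := hcov'' (fun _ => ⟨0, by omega⟩)
    exact ⟨φ, hφ⟩
  have h2 : ∑ φ ∈ t', φ.dE ^ h ≤ 1 := by
    calc ∑ φ ∈ t', φ.dE ^ h = ∑ i ∈ t, ((i : Pattern Γ k).dE ^ h) :=
          Finset.sum_image (fun x _ y _ hxy => Subtype.ext hxy)
      _ ≤ ∑' φ : 𝒰, (φ : Pattern Γ k).dE ^ h := ENNReal.sum_le_tsum t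
      _ ≤ 1 := hsum
  have h3 : ∑ φ ∈ t', ((2 : ℝ)⁻¹ ^ φ.dom.card) ^ h ≤ 1 := by
    rw [← ENNReal.ofReal_le_one, ENNReal.ofReal_sum_of_nonneg
      (fun φ _ => Real.rpow_nonneg (by positivity) _)]
    simpa only [← WAux.dE_rpow] using h2
  have h4 : ∀ φ ∈ t', ((k : ℝ))⁻¹ ^ φ.dom.card < ((2 : ℝ)⁻¹ ^ φ.dom.card) ^ h :=
    fun φ _ => WAux.term_lt hk (Finset.card_pos.mpr φ.dom_nonempty) h0 hcon
  have := Finset.sum_lt_sum_of_nonempty htne h4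
  linarith

end Aux2

/-- `𝔴(k^Γ) = log₂ k`, and `𝔴(X) < log₂ k` for every closed proper subset `X ⊊ k^Γ`. -/
theorem width_univ_and_width_lt_of_proper_closed
    {Γ : Type*} [Group Γ] [Countable Γ] [Infinite Γ] {k : ℕ} (hk : 2 ≤ k) :
    width (Set.univ : Set (Γ → Fin k)) = ENNReal.ofReal (Real.logb 2 k) ∧
    ∀ X : Set (Γ → Fin k), IsClosed X → X ≠ Set.univ →
      width X < ENNReal.ofReal (Real.logb 2 k) := by
  classical
  have hkpos : (0 : ℝ) < (k : ℝ) := by positivity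
  have hlogb0 : 0 ≤ Real.logb 2 (k : ℝ) :=
    Real.logb_nonneg (by norm_num) (by exact_mod_cast Nat.one_le_of_lt hk)
  obtain ⟨g₀⟩ := (inferInstance : Nonempty Γ)
  -- lower bound for any cover of univ
  have hlow : ∀ 𝒰 : Set (Pattern Γ k), IsCover 𝒰 Set.univ →
      ENNReal.ofReal (Real.logb 2 (k : ℝ)) ≤ famWidth 𝒰 := by
    intro 𝒰 hcov
    refine le_sInf fun w hw => ?_
    obtain ⟨h, h0, rfl, hsum⟩ := hw
    exact ENNReal.ofReal_le_ofReal (WAux.logb_le hk hcov h0 hsum)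
  constructor
  · -- width univ = logb 2 k
    refine le_antisymm ?_ (le_iInf fun 𝒰 => le_iInf fun hcov => hlow 𝒰 hcov)
    -- explicit cover with dom = {g₀}
    set P : Fin k → Pattern Γ k := fun i =>
      ⟨{g₀}, Finset.singleton_nonempty _, fun _ => i⟩ with hP
    have hPinj : Function.Injective P := by
      intro i j hij
      exact congrFun (congrArg Pattern.val hij) g₀
    have hcov : IsCover (Set.range P) Set.univ := by
      intro x _
      refine Set.mem_iUnion₂.mpr ⟨P (x g₀), ⟨x g₀, rfl⟩, ?_⟩
      intro g hg
      rw [Finset.mem_singleton] at hg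
      subst hg; rfl
    refine le_trans (iInf₂_le (Set.range P) hcov) (sInf_le ?_)
    refine ⟨Real.logb 2 (k : ℝ), hlogb0, rfl, ?_⟩
    have hterm : ∀ i : Fin k, (P i).dE ^ (Real.logb 2 (k : ℝ))
        = ENNReal.ofReal ((k : ℝ))⁻¹ := by
      intro i
      rw [WAux.dE_rpow]
      congr 1
      have : (P i).dom.card = 1 := Finset.card_singleton _
      rw [this, pow_one, Real.inv_rpow (by norm_num),
        Real.rpow_logb (by norm_num) (by norm_num) hkpos]
    calc ∑' φ : ↥(Set.range P), (φ : Pattern Γ k).dE ^ Real.logb 2 (k : ℝ)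
        = ∑' i : Fin k, (P i).dE ^ Real.logb 2 (k : ℝ) :=
          tsum_range (fun φ => φ.dE ^ Real.logb 2 (k : ℝ)) hPinj
      _ = ∑ i : Fin k, ENNReal.ofReal ((k : ℝ))⁻¹ := by
          rw [tsum_fintype]; exact Finset.sum_congr rfl fun i _ => hterm i
      _ = 1 := by
          rw [Finset.sum_const, Finset.card_univ, Fintype.card_fin, nsmul_eq_mul,
            ← ENNReal.ofReal_natCast, ← ENNReal.ofReal_mul hkpos.le,
            mul_inv_cancel₀ (ne_of_gt hkpos), ENNReal.ofReal_one]
      _ ≤ 1 := le_rfl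
  · -- proper closed subsets
    intro X hX hXne
    obtain ⟨x, hx⟩ : ∃ x, x ∉ X := by
      by_contra hc; push_neg at hc
      exact hXne (Set.eq_univ_iff_forall.mpr hc)
    obtain ⟨I, u, hu, hsub⟩ := isOpen_pi_iff.mp hX.isOpen_compl x hx
    set F : Finset Γ := insert g₀ I with hF
    have hFne : F.Nonempty := ⟨g₀, Finset.mem_insert_self _ _⟩
    set m := F.card with hm
    have hm1 : 1 ≤ m := Finset.card_pos.mpr hFne
    have hcyl : ∀ y : Γ → Fin k, (∀ g ∈ F, y g = x g) → y ∉ X := by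
      intro y hy hyX
      refine hsub ?_ hyX
      intro g hg
      have hg' : g ∈ I := hg
      rw [hy g (Finset.mem_insert_of_mem hg')]
      exact (hu g hg').2
    -- the cover of X
    set c : ↥F → Fin k := fun g => x g with hc
    let idx := {v : ↥F → Fin k // v ≠ c}
    set mk : idx → Pattern Γ k := fun v =>
      ⟨F, hFne, fun g => if hg : g ∈ F then v.1 ⟨g, hg⟩ else ⟨0, by omega⟩⟩ with hmk
    have hmkinj : Function.Injective mk := by
      intro v w hvw
      apply Subtype.ext; funext g
      have := congrFun (congrArg Pattern.val hvw) (g : Γ)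
      simpa [hmk, dif_pos g.2] using this
    have hcov : IsCover (Set.range mk) X := by
      intro y hy
      have hne : ¬ ∀ g ∈ F, y g = x g := fun hcon => hcyl y hcon hy
      refine Set.mem_iUnion₂.mpr ⟨mk ⟨fun g => y g, ?_⟩, ⟨_, rfl⟩, ?_⟩
      · intro hcon
        exact hne fun g hg => congrFun hcon ⟨g, hg⟩
      · intro g hg
        simp [hmk, dif_pos hg]
        intro h; exact (h hg).elim
    -- compute the width of this cover
    set K : ℝ := (k : ℝ) ^ m - 1 with hK
    have hkm2 : (2 : ℝ) ≤ (k : ℝ) ^ m := by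
      calc (2 : ℝ) ≤ (k : ℝ) := by exact_mod_cast hk
        _ = (k : ℝ) ^ 1 := (pow_one _).symm
        _ ≤ (k : ℝ) ^ m := pow_le_pow_right₀ (by exact_mod_cast Nat.one_le_of_lt hk) hm1
    have hK1 : (1 : ℝ) ≤ K := by simp only [hK]; linarith
    have hKpos : (0 : ℝ) < K := by linarith
    set h₀ : ℝ := Real.logb 2 K / m with hh₀
    have hmR : (0 : ℝ) < (m : ℝ) := by exact_mod_cast hm1
    have hh₀0 : 0 ≤ h₀ := div_nonneg (Real.logb_nonneg (by norm_num) hK1) hmR.le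
    have hmne : (m : ℝ) ≠ 0 := ne_of_gt hmR
    have hmul : (m : ℝ) * h₀ = Real.logb 2 K := by
      rw [hh₀]; field_simp
    have hlt : h₀ < Real.logb 2 (k : ℝ) := by
      rw [hh₀, div_lt_iff₀ hmR]
      calc Real.logb 2 K < Real.logb 2 ((k : ℝ) ^ m) :=
            Real.logb_lt_logb (by norm_num) hKpos (by linarith [hK.le])
        _ = (m : ℝ) * Real.logb 2 (k : ℝ) := Real.logb_pow _ _ _
        _ = Real.logb 2 (k : ℝ) * (m : ℝ) := mul_comm _ _
    have hterm : ∀ v : idx, (mk v).dE ^ h₀ = ENNReal.ofReal K⁻¹ := by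
      intro v
      rw [WAux.dE_rpow]
      congr 1
      have hcard : (mk v).dom.card = m := rfl
      rw [hcard, WAux.halfpow hKpos hmul]
    have hcard : (Fintype.card idx : ℝ) ≤ K := by
      have : Fintype.card idx = k ^ m - 1 := by
        have h1 : Fintype.card idx
            = Fintype.card (↥F → Fin k) - Fintype.card {v : ↥F → Fin k // v = c} :=
          Fintype.card_subtype_compl _
        rw [h1, Fintype.card_subtype_eq, Fintype.card_fun, Fintype.card_coe,
          Fintype.card_fin]
      rw [this, hK]
      have hkm1 : 1 ≤ k ^ m := Nat.one_le_pow _ _ (by omega)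
      push_cast [Nat.cast_sub hkm1]
      simp
    have hsum : ∑' φ : ↥(Set.range mk), (φ : Pattern Γ k).dE ^ h₀ ≤ 1 := by
      calc ∑' φ : ↥(Set.range mk), (φ : Pattern Γ k).dE ^ h₀
          = ∑' v : idx, (mk v).dE ^ h₀ :=
            tsum_range (fun φ : Pattern Γ k => φ.dE ^ h₀) hmkinj
        _ = ∑ v : idx, ENNReal.ofReal K⁻¹ := by
            rw [tsum_fintype]; exact Finset.sum_congr rfl fun v _ => hterm v
        _ = (Fintype.card idx : ℝ≥0∞) * ENNReal.ofReal K⁻¹ := by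
            rw [Finset.sum_const, Finset.card_univ, nsmul_eq_mul]
        _ ≤ ENNReal.ofReal K * ENNReal.ofReal K⁻¹ := by
            apply mul_le_mul_left
            rw [← ENNReal.ofReal_natCast]
            exact ENNReal.ofReal_le_ofReal hcard
        _ = 1 := by
            rw [← ENNReal.ofReal_mul hKpos.le, mul_inv_cancel₀ (ne_of_gt hKpos),
              ENNReal.ofReal_one]
    have hfw : famWidth (Set.range mk) ≤ ENNReal.ofReal h₀ :=
      sInf_le ⟨h₀, hh₀0, rfl, hsum⟩
    calc width X ≤ famWidth (Set.range mk) := iInf₂_le (Set.range mk) hcov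
      _ ≤ ENNReal.ofReal h₀ := hfw
      _ < ENNReal.ofReal (Real.logb 2 (k : ℝ)) := by
          rw [ENNReal.ofReal_lt_ofReal_iff (lt_of_le_of_lt hh₀0 hlt)]
          exact hlt
end

section
/- If X ⊆ k^Γ is a subshift, then the Hausdorff dimension of X (with respect to the metric dist) is at least the width 𝔴(X). -/
open scoped ENNReal

/-- If `X ⊆ k^Γ` is a subshift, then its Hausdorff dimension with respect to the metric
`dist(x,y) = 2^{-min{i : x(γᵢ) ≠ y(γᵢ)}}` is at least the width `𝔴(X)`. -/
theorem width_le_dimH_of_subshift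
    {Γ : Type*} [Group Γ] [Countable Γ] [Infinite Γ] {k : ℕ} (hk : 2 ≤ k) (e : ℕ ≃ Γ)
    (m : MetricSpace (Γ → Fin k))
    (hdist : ∀ x y : Γ → Fin k, x ≠ y →
      m.dist x y = (2 : ℝ) ^ (-((sInf {i : ℕ | x (e i) ≠ y (e i)} : ℕ) : ℤ)))
    {X : Set (Γ → Fin k)} (hcl : @IsClosed _ m.toUniformSpace.toTopologicalSpace X)
    (hinv : ShiftInvariant X) :
    width X ≤ @dimH _ m.toEMetricSpace X := by
  classical
  letI := m
  letI msp : MeasurableSpace (Γ → Fin k) := @borel _ m.toUniformSpace.toTopologicalSpace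
  haveI bsp : @BorelSpace _ m.toUniformSpace.toTopologicalSpace msp :=
    @BorelSpace.mk _ m.toUniformSpace.toTopologicalSpace msp rfl
  by_contra hcon
  push_neg at hcon
  obtain ⟨p, hp1, hp2⟩ := ENNReal.lt_iff_exists_nnreal_btwn.mp hcon
  refine absurd ?_ hp2.not_ge
  have hppos : (0:ℝ) < (p:ℝ) := by
    have : (0:ℝ≥0∞) < (p:ℝ≥0∞) := (zero_le).trans_lt hp1
    exact_mod_cast ENNReal.coe_pos.mp this
  -- agreement lemma: close points agree on initial coordinates
  have agree : ∀ (y z : Γ → Fin k) (j : ℕ), edist y z < (2⁻¹:ℝ≥0∞)^j →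
      ∀ i ≤ j, y (e i) = z (e i) := by
    intro y z j hlt i hij
    by_contra hne
    have hyz : y ≠ z := fun h => hne (congrFun h (e i))
    have hc : sInf {i : ℕ | y (e i) ≠ z (e i)} ≤ j :=
      le_trans (Nat.sInf_le hne) hij
    have hdge : (2:ℝ)^(-(j:ℤ)) ≤ dist y z := by
      rw [show dist y z = m.dist y z from rfl, hdist y z hyz]
      refine zpow_le_zpow_right₀ one_le_two ?_
      exact neg_le_neg (by exact_mod_cast hc)
    have hkey : (2⁻¹:ℝ≥0∞)^j ≤ edist y z := by
      rw [edist_dist]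
      calc (2⁻¹:ℝ≥0∞)^j = ENNReal.ofReal ((2:ℝ)^(-(j:ℤ))) := by
            rw [zpow_neg, ← inv_zpow, zpow_natCast, ENNReal.ofReal_pow (by norm_num)]
            congr 1
            rw [show ((2:ℝ)⁻¹) = ((2:ℝ≥0∞)⁻¹).toReal by norm_num,
              ENNReal.ofReal_toReal (by norm_num)]
        _ ≤ _ := ENNReal.ofReal_le_ofReal hdge
    exact absurd hlt hkey.not_gt
  -- basic cylinder patterns on initial segments
  set pat : (Γ → Fin k) → ℕ → Pattern Γ k := fun x j =>
    ⟨(Finset.range (j+1)).image e,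
      (Finset.nonempty_range_iff.mpr (Nat.succ_ne_zero j)).image e, x⟩ with hpat
  have pat_dE : ∀ (x : Γ → Fin k) (j : ℕ), (pat x j).dE = (2⁻¹:ℝ≥0∞)^(j+1) := by
    intro x j
    unfold Pattern.dE
    rw [hpat]
    simp [Finset.card_image_of_injective _ e.injective]
  have pat_mem : ∀ (x z : Γ → Fin k) (j : ℕ),
      (∀ i ≤ j, z (e i) = x (e i)) → z ∈ (pat x j).cylinder := by
    intro x z j h g hg
    rw [hpat] at hg ⊢
    simp only [Finset.mem_image, Finset.mem_range] at hg
    obtain ⟨i, hi, rfl⟩ := hg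
    exact h i (Nat.lt_succ_iff.mp hi)
  -- Hausdorff measure is zero, extract a good cover
  have hμ : @MeasureTheory.Measure.hausdorffMeasure _ m.toEMetricSpace msp bsp (p:ℝ) X = 0 :=
    @hausdorffMeasure_of_dimH_lt _ m.toEMetricSpace msp bsp X p hp1
  have happ := @MeasureTheory.Measure.hausdorffMeasure_apply _ m.toEMetricSpace msp bsp (p:ℝ) X
  rw [happ] at hμ
  simp only [ENNReal.iSup_eq_zero] at hμ
  have key0 := hμ 2⁻¹ (by norm_num)
  have key := key0.le.trans_lt (by norm_num : (0:ℝ≥0∞) < 2⁻¹)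
  simp only [iInf_lt_iff] at key
  obtain ⟨t, hcov, hdiam, hsum⟩ := key
  -- for each n, choose a pattern covering t n with controlled dE
  have hex : ∀ n : ℕ, ∃ φ : Pattern Γ k, t n ⊆ φ.cylinder ∧
      φ.dE ^ (p:ℝ) ≤ (⨆ _ : (t n).Nonempty, EMetric.diam (t n) ^ (p:ℝ))
        + (2⁻¹:ℝ≥0∞)^(n+2) := by
    intro n
    have hsmall : ∀ (x : Γ → Fin k), ((pat x (Nat.ceil (((n:ℝ)+2)/(p:ℝ)))).dE) ^ (p:ℝ)
        ≤ (2⁻¹:ℝ≥0∞)^(n+2) := by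
      intro x
      set M := Nat.ceil (((n:ℝ)+2)/(p:ℝ)) with hM
      rw [pat_dE]
      rw [← ENNReal.rpow_natCast (2⁻¹:ℝ≥0∞) (M+1), ← ENNReal.rpow_mul,
          ← ENNReal.rpow_natCast (2⁻¹:ℝ≥0∞) (n+2)]
      refine ENNReal.rpow_le_rpow_of_exponent_ge (by norm_num) ?_
      have h1 : ((n:ℝ)+2)/(p:ℝ) ≤ M := Nat.le_ceil _
      have h2 : ((n:ℝ)+2) ≤ (M:ℝ) * p := (div_le_iff₀ hppos).mp h1
      push_cast
      nlinarith
    by_cases hne : (t n).Nonempty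
    · obtain ⟨c, hc⟩ := hne
      by_cases hd : EMetric.diam (t n) = 0
      · refine ⟨pat c (Nat.ceil (((n:ℝ)+2)/(p:ℝ))), ?_, ?_⟩
        · intro z hz
          have hzc : z = c := by
            have h1 : edist z c ≤ EMetric.diam (t n) := EMetric.edist_le_diam_of_mem hz hc
            rw [hd] at h1
            exact edist_eq_zero.mp (le_antisymm h1 (zero_le))
          subst hzc
          exact pat_mem z z _ (fun i _ => rfl)
        · exact le_add_left (hsmall c)
      · have hfind : ∃ j : ℕ, (2⁻¹:ℝ≥0∞)^(j+1) ≤ EMetric.diam (t n) := by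
          obtain ⟨j, hj⟩ := ENNReal.exists_inv_two_pow_lt hd
          refine ⟨j, le_trans ?_ hj.le⟩
          rw [pow_succ]
          exact mul_le_of_le_one_right (zero_le) (by norm_num)
        set j := Nat.find hfind with hj
        have hle : (2⁻¹:ℝ≥0∞)^(j+1) ≤ EMetric.diam (t n) := Nat.find_spec hfind
        have hlt : EMetric.diam (t n) < (2⁻¹:ℝ≥0∞)^j := by
          rcases Nat.eq_zero_or_pos j with h0 | hpos
          · rw [h0, pow_zero]
            exact lt_of_le_of_lt (hdiam n) (by norm_num)
          · obtain ⟨j', hj'⟩ := Nat.exists_eq_succ_of_ne_zero hpos.ne'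
            rw [hj']
            have := Nat.find_min hfind (m := j') (by omega)
            exact lt_of_not_ge this
        refine ⟨pat c j, ?_, ?_⟩
        · intro z hz
          refine pat_mem c z j (agree z c j ?_)
          exact lt_of_le_of_lt (EMetric.edist_le_diam_of_mem hz hc) hlt
        · refine le_add_right ?_
          rw [iSup_pos ⟨c, hc⟩, pat_dE]
          exact ENNReal.rpow_le_rpow hle hppos.le
    · refine ⟨pat (fun _ => ⟨0, lt_of_lt_of_le two_pos hk⟩) (Nat.ceil (((n:ℝ)+2)/(p:ℝ))),
        ?_, le_add_left (hsmall _)⟩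
      intro z hz
      exact absurd ⟨z, hz⟩ hne
  choose F hF1 hF2 using hex
  have hcover : IsCover (Set.range F) X := by
    intro x hx
    obtain ⟨n, hn⟩ := Set.mem_iUnion.mp (hcov hx)
    exact Set.mem_iUnion₂.mpr ⟨F n, Set.mem_range_self n, hF1 n hn⟩
  have geo : ∑' n : ℕ, (2⁻¹:ℝ≥0∞)^(n+2) = 2⁻¹ := by
    calc ∑' n : ℕ, (2⁻¹:ℝ≥0∞)^(n+2)
        = ∑' n : ℕ, (2⁻¹:ℝ≥0∞)^n * (2⁻¹:ℝ≥0∞)^2 := tsum_congr fun n => pow_add _ n 2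
      _ = (1 - 2⁻¹)⁻¹ * (2⁻¹:ℝ≥0∞)^2 := by rw [ENNReal.tsum_mul_right, ENNReal.tsum_geometric]
      _ = 2⁻¹ := by
          rw [ENNReal.one_sub_inv_two, inv_inv, pow_two, ← mul_assoc,
            ENNReal.mul_inv_cancel two_ne_zero ENNReal.ofNat_ne_top, one_mul]
  have hsum2 : ∑' φ : ↥(Set.range F), (φ : Pattern Γ k).dE ^ (p:ℝ) ≤ 1 := by
    calc ∑' φ : ↥(Set.range F), (φ : Pattern Γ k).dE ^ (p:ℝ)
        ≤ ∑' n, (F n).dE ^ (p:ℝ) :=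
          ENNReal.tsum_le_tsum_comp_of_surjective Set.rangeFactorization_surjective _
      _ ≤ ∑' n, ((⨆ _ : (t n).Nonempty, EMetric.diam (t n) ^ (p:ℝ))
            + (2⁻¹:ℝ≥0∞)^(n+2)) := ENNReal.tsum_le_tsum hF2
      _ = (∑' n, ⨆ _ : (t n).Nonempty, EMetric.diam (t n) ^ (p:ℝ))
            + ∑' n, (2⁻¹:ℝ≥0∞)^(n+2) := ENNReal.tsum_add
      _ ≤ 2⁻¹ + 2⁻¹ := add_le_add hsum.le geo.le
      _ = 1 := ENNReal.inv_two_add_inv_two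
  have h1 : width X ≤ famWidth (Set.range F) := by
    unfold width
    exact iInf₂_le (Set.range F) hcover
  have h2 : famWidth (Set.range F) ≤ (p : ℝ≥0∞) :=
    sInf_le ⟨(p:ℝ), hppos.le, ENNReal.ofReal_coe_nnreal.symm, hsum2⟩
  exact h1.trans h2
end

section
/- If X ⊆ k^Γ is a subshift with pointwise width 𝔴*(X) > (1/2)·log₂ k, then the left shift action of Γ on X is free. -/
open scoped ENNReal

/-- If `X ⊆ k^Γ` is a subshift with `𝔴*(X) > (1/2)·log₂ k`, then the shift action on `X`
is free. -/
theorem free_of_pwWidth_gt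
    {Γ : Type*} [Group Γ] [Countable Γ] [Infinite Γ] {k : ℕ} (hk : 2 ≤ k)
    {X : Set (Γ → Fin k)} (hcl : IsClosed X) (hinv : ShiftInvariant X)
    (hw : ENNReal.ofReal (Real.logb 2 k / 2) < pwWidth X) :
    ∀ x ∈ X, ∀ γ : Γ, lshift γ x = x → γ = 1 := by
  intro x hx γ hγx
  by_contra hγ
  classical
  set h : ℝ := Real.logb 2 k / 2 with hh
  have hk0 : (0:ℝ) < k := by positivity
  have hkk : (1:ℝ) < k := by exact_mod_cast lt_of_lt_of_le one_lt_two hk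
  have hh0 : 0 ≤ h := div_nonneg (Real.logb_nonneg one_lt_two hkk.le) (by norm_num)
  let φ : Fin k → Pattern Γ k := fun i => ⟨{1, γ}, ⟨1, by simp⟩, fun _ => i⟩
  have hφinj : Function.Injective φ := fun i j e => congrFun (congrArg Pattern.val e) 1
  set 𝒰 : Set (Pattern Γ k) := Set.range φ with h𝒰
  have hxγ : ∀ δ : Γ, x (δ * γ) = x δ := fun δ => congrFun hγx δ
  have hclosed : IsClosed {y : Γ → Fin k | y γ = y 1} :=
    isClosed_eq (continuous_apply γ) (continuous_apply 1)
  have hsub : closure (rightOrbit x) ⊆ {y : Γ → Fin k | y γ = y 1} := by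
    refine closure_minimal ?_ hclosed
    rintro _ ⟨η, rfl⟩
    simpa [rshift] using hxγ η
  have hcover : IsCover 𝒰 (closure (rightOrbit x)) := by
    intro y hy
    refine Set.mem_iUnion₂.2 ⟨φ (y 1), ⟨y 1, rfl⟩, ?_⟩
    intro g hg
    have hg' : g = 1 ∨ g = γ := by simpa [φ] using hg
    rcases hg' with rfl | rfl
    · rfl
    · exact hsub hy
  have hcard : ({1, γ} : Finset Γ).card = 2 := by
    rw [Finset.card_insert_of_notMem (by simpa using (Ne.symm hγ)), Finset.card_singleton]
  have hdE : ∀ i, (φ i).dE = 4⁻¹ := by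
    intro i
    simp only [Pattern.dE, φ, hcard]
    rw [← ENNReal.inv_pow]
    norm_num
  have h4 : (4:ℝ) ^ h = (k:ℝ) := by
    have : (4:ℝ) = (2:ℝ) ^ (2:ℝ) := by
      rw [show ((2:ℝ):ℝ) = ((2:ℕ):ℝ) by norm_num, Real.rpow_natCast]; norm_num
    rw [this, ← Real.rpow_mul (by norm_num), hh, mul_div_cancel₀ _ (by norm_num : (2:ℝ) ≠ 0)]
    exact Real.rpow_logb (by norm_num) (by norm_num) hk0
  have hval : ((4:ℝ≥0∞)⁻¹) ^ h = ((k:ℝ≥0∞))⁻¹ := by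
    rw [ENNReal.inv_rpow, show (4:ℝ≥0∞) = ENNReal.ofReal 4 by norm_num,
      ENNReal.ofReal_rpow_of_pos (by norm_num), h4, ENNReal.ofReal_natCast]
  have hsum : ∑' ψ : 𝒰, (ψ : Pattern Γ k).dE ^ h ≤ 1 := by
    have he := (Equiv.ofInjective φ hφinj).tsum_eq
      (f := fun ψ : 𝒰 => (ψ : Pattern Γ k).dE ^ h)
    rw [← he]
    have : ∑' i : Fin k, ((φ i).dE) ^ h = (k : ℝ≥0∞) * ((k:ℝ≥0∞))⁻¹ := by
      simp only [hdE, hval]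
      rw [tsum_fintype]
      simp [Finset.sum_const, Finset.card_univ, mul_comm]
    calc ∑' i : Fin k, ((Equiv.ofInjective φ hφinj i : Pattern Γ k)).dE ^ h
        = ∑' i : Fin k, ((φ i).dE) ^ h := by rfl
      _ = (k : ℝ≥0∞) * ((k:ℝ≥0∞))⁻¹ := this
      _ = 1 := ENNReal.mul_inv_cancel (by exact_mod_cast (by omega : k ≠ 0))
            (ENNReal.natCast_ne_top k)
      _ ≤ 1 := le_rfl
  have h1 : famWidth 𝒰 ≤ ENNReal.ofReal h := sInf_le ⟨h, hh0, rfl, hsum⟩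
  have h2 : width (closure (rightOrbit x)) ≤ famWidth 𝒰 := iInf₂_le 𝒰 hcover
  have h3 : pwWidth X ≤ width (closure (rightOrbit x)) :=
    le_trans (iInf₂_le x hx) (min_le_right _ _)
  exact absurd (lt_of_lt_of_le hw ((h3.trans h2).trans h1)) (lt_irrefl _)
end

section
/- If U ⊆ k^Γ is a shift-invariant open set and X ⊆ k^Γ is a subshift with 𝔴*(X) > 𝔴(k^Γ \ U), then X ⊆ U. -/
open scoped ENNReal

lemma width_mono {Γ : Type*} {k : ℕ} {A B : Set (Γ → Fin k)} (h : A ⊆ B) :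
    width A ≤ width B := by
  refine le_iInf₂ fun 𝒰 hc => ?_
  exact iInf₂_le 𝒰 (h.trans hc)

/-- If `U ⊆ k^Γ` is a shift-invariant open set and `X ⊆ k^Γ` is a subshift with
`𝔴*(X) > 𝔴(k^Γ \ U)`, then `X ⊆ U`. -/
theorem subshift_subset_open_of_pwWidth_gt
    {Γ : Type*} [Group Γ] [Countable Γ] [Infinite Γ] {k : ℕ} (hk : 2 ≤ k)
    {U X : Set (Γ → Fin k)} (hUopen : IsOpen U) (hUinv : ShiftInvariant U)
    (hcl : IsClosed X) (hinv : ShiftInvariant X)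
    (hw : width (Set.univ \ U) < pwWidth X) :
    X ⊆ U := by
  intro x hx
  by_contra hxU
  have horb : closure (leftOrbit x) ⊆ Set.univ \ U := by
    apply closure_minimal
    · rintro _ ⟨γ, rfl⟩
      refine ⟨trivial, fun h => hxU ?_⟩
      have := hUinv γ⁻¹ _ h
      have hxx : lshift γ⁻¹ (lshift γ x) = x := by
        funext δ; simp [lshift, mul_assoc]
      rwa [hxx] at this
    · exact isClosed_univ.sdiff hUopen
  have h1 : width (closure (leftOrbit x)) ≤ width (Set.univ \ U) := width_mono horb
  have h2 : pwWidth X ≤ width (Set.univ \ U) :=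
    le_trans (iInf₂_le x hx) (le_trans (min_le_left _ _) h1)
  exact hw.not_ge h2
end

section
/- Let Γ be a countably infinite group, Φ a set of nonempty finite partial functions Γ ⇀ k, and h > 0 such that h + Σ_{φ∈Φ} (−log₂ 2^{−|φ|})·(−log₂(1 − 2^{−h|φ|})) < log₂ k, i.e., h + Σ_{φ∈Φ} |φ|·|log₂(1 − 2^{−h|φ|})| < log₂ k. Then the function ω(φ) := 2^{−h|φ|} on the shift-orbit Γ·Φ is a witness to the correctness of Γ·Φ for the LLL: for all φ ∈ Γ·Φ, k^{−|φ|} ≤ ω(φ)·∏_{ψ∈N(φ, Γ·Φ)}(1 − ω(ψ)). -/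
open scoped ENNReal

/-- The neighborhood `N(φ, Ψ) = {ψ ∈ Ψ : ψ ≠ φ, dom(φ) ∩ dom(ψ) ≠ ∅}`. -/
def nbhd {Γ : Type*} [DecidableEq Γ] {k : ℕ} (φ : Pattern Γ k) (Ψ : Set (Pattern Γ k)) :
    Set (Pattern Γ k) :=
  {ψ ∈ Ψ | ψ ≠ φ ∧ (φ.dom ∩ ψ.dom).Nonempty}

/-- The shift orbit `Γ·Φ` of a set of patterns. -/
def orbitOf {Γ : Type*} [Group Γ] [DecidableEq Γ] {k : ℕ} (Φ : Set (Pattern Γ k)) :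
    Set (Pattern Γ k) :=
  {ψ | ∃ γ : Γ, ∃ φ ∈ Φ, ψ = patShift γ φ}


lemma card_patShift {Γ : Type*} [Group Γ] [DecidableEq Γ] {k : ℕ} (γ : Γ) (φ : Pattern Γ k) :
    (patShift γ φ).dom.card = φ.dom.card :=
  Finset.card_image_of_injective _ (mul_left_injective γ⁻¹)

/-- If `h > 0` satisfies `h + Σ_{φ ∈ Φ} |φ|·|log₂(1 − 2^{−h|φ|})| < log₂ k`, then
`ω(φ) := 2^{−h|φ|}` is a witness to the correctness of `Γ·Φ` for the LLL:
`k^{−|φ|} ≤ ω(φ)·∏_{ψ ∈ N(φ, Γ·Φ)} (1 − ω(ψ))` for all `φ ∈ Γ·Φ`. -/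
theorem shift_orbit_LLL_witness
    {Γ : Type*} [Group Γ] [DecidableEq Γ] [Countable Γ] [Infinite Γ] {k : ℕ} (hk : 2 ≤ k)
    (Φ : Set (Pattern Γ k)) (h : ℝ) (hh : 0 < h)
    (hsum : ENNReal.ofReal h +
        ∑' φ : Φ, ENNReal.ofReal ((φ.1.dom.card : ℝ) *
          |Real.logb 2 (1 - (2 : ℝ) ^ (-(h * (φ.1.dom.card : ℝ))))|) <
      ENNReal.ofReal (Real.logb 2 k)) :
    ∀ φ ∈ orbitOf Φ,
      ((k : ℝ))⁻¹ ^ φ.dom.card ≤ (2 : ℝ) ^ (-(h * (φ.dom.card : ℝ))) *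
        ∏' ψ : nbhd φ (orbitOf Φ), (1 - (2 : ℝ) ^ (-(h * ((ψ.1.dom.card : ℝ))))) := by
  intro φ hφ
  have h2 : (1:ℝ) < 2 := one_lt_two
  set B : ℝ := Real.logb 2 k with hB
  have hcard : ∀ ψ : Pattern Γ k, (1:ℝ) ≤ ψ.dom.card := fun ψ => by
    exact_mod_cast Finset.card_pos.2 ψ.dom_nonempty
  have he_pos : ∀ ψ : Pattern Γ k, (0:ℝ) < (2:ℝ) ^ (-(h * (ψ.dom.card:ℝ))) :=
    fun ψ => Real.rpow_pos_of_pos two_pos _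
  have he_lt : ∀ ψ : Pattern Γ k, (2:ℝ) ^ (-(h * (ψ.dom.card:ℝ))) < 1 := fun ψ =>
    Real.rpow_lt_one_of_one_lt_of_neg h2 (by nlinarith [hcard ψ])
  set f : Pattern Γ k → ℝ := fun ψ => 1 - (2:ℝ) ^ (-(h * (ψ.dom.card:ℝ))) with hfdef
  have hf_pos : ∀ ψ, 0 < f ψ := fun ψ => by
    have := he_lt ψ; simp only [hfdef]; linarith
  have hf_lt : ∀ ψ, f ψ < 1 := fun ψ => by
    have := he_pos ψ; simp only [hfdef]; linarith
  set L : Pattern Γ k → ℝ := fun ψ => |Real.logb 2 (f ψ)| with hLdef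
  have hL_nonneg : ∀ ψ, 0 ≤ L ψ := fun ψ => abs_nonneg _
  have hLval : ∀ ψ, L ψ = -Real.logb 2 (f ψ) := fun ψ =>
    abs_of_neg (Real.logb_neg h2 (hf_pos ψ) (hf_lt ψ))
  have hLshift : ∀ (γ : Γ) (ψ : Pattern Γ k), L (patShift γ ψ) = L ψ := by
    intro γ ψ; simp only [hLdef, hfdef, card_patShift]
  set N := nbhd φ (orbitOf Φ) with hNdef
  have hmem : ∀ ψ : N, ∃ p : Φ × Γ, patShift p.2 p.1.1 = ψ.1 := by
    rintro ⟨ψ, hψN⟩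
    obtain ⟨γ, φ₀, hφ₀, rfl⟩ := hψN.1
    exact ⟨(⟨φ₀, hφ₀⟩, γ), rfl⟩
  choose s hs using hmem
  have hsinj : Function.Injective s := fun ψ ψ' hss => Subtype.ext (by rw [← hs ψ, ← hs ψ', hss])
  set G : Φ × Γ → ℝ≥0∞ := fun p =>
    if (φ.dom ∩ (patShift p.2 p.1.1).dom).Nonempty then ENNReal.ofReal (L p.1.1) else 0 with hGdef
  have hgs : ∀ ψ : N, ENNReal.ofReal (L ψ.1) = G (s ψ) := by
    intro ψ
    have h1 : (φ.dom ∩ (patShift (s ψ).2 (s ψ).1.1).dom).Nonempty := by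
      rw [hs ψ]; exact ψ.2.2.2
    simp only [hGdef, if_pos h1]
    rw [← hLshift (s ψ).2 (s ψ).1.1, hs ψ]
  set S : ℝ≥0∞ := ∑' φ₀ : Φ, ENNReal.ofReal ((φ₀.1.dom.card : ℝ) *
      |Real.logb 2 (1 - (2 : ℝ) ^ (-(h * (φ₀.1.dom.card : ℝ))))|) with hSdef
  have hT1 : ∑' ψ : N, ENNReal.ofReal (L ψ.1) ≤ (φ.dom.card : ℝ≥0∞) * S := by
    calc ∑' ψ : N, ENNReal.ofReal (L ψ.1) = ∑' ψ : N, G (s ψ) := tsum_congr hgs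
    _ ≤ ∑' p : Φ × Γ, G p := ENNReal.tsum_comp_le_tsum_of_injective hsinj G
    _ = ∑' (φ₀ : Φ) (γ : Γ), G (φ₀, γ) := ENNReal.tsum_prod'
    _ ≤ ∑' φ₀ : Φ, (φ.dom.card : ℝ≥0∞) * ENNReal.ofReal ((φ₀.1.dom.card:ℝ) * L φ₀.1) := by
        refine ENNReal.tsum_le_tsum fun φ₀ => ?_
        classical
        set F : Finset Γ := (φ.dom ×ˢ φ₀.1.dom).image (fun q => q.1⁻¹ * q.2) with hFdef
        have hzero : ∀ γ ∉ F, G (φ₀, γ) = 0 := by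
          intro γ hγ
          simp only [hGdef]
          rw [if_neg]
          intro hne
          obtain ⟨d, hd⟩ := hne
          rw [Finset.mem_inter] at hd
          obtain ⟨hd1, hd2⟩ := hd
          simp only [patShift, Finset.mem_image] at hd2
          obtain ⟨b, hb, hbd⟩ := hd2
          apply hγ
          rw [hFdef]
          refine Finset.mem_image.2 ⟨(d, b), Finset.mem_product.2 ⟨hd1, hb⟩, ?_⟩
          have : d * γ = b := by rw [← hbd]; group
          rw [← this]; group
        calc ∑' γ : Γ, G (φ₀, γ) = ∑ γ ∈ F, G (φ₀, γ) := tsum_eq_sum hzero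
        _ ≤ ∑ γ ∈ F, ENNReal.ofReal (L φ₀.1) := Finset.sum_le_sum fun γ _ => by
              simp only [hGdef]; split_ifs <;> simp
        _ = (F.card : ℝ≥0∞) * ENNReal.ofReal (L φ₀.1) := by
              rw [Finset.sum_const, nsmul_eq_mul]
        _ ≤ ((φ.dom.card * φ₀.1.dom.card : ℕ) : ℝ≥0∞) * ENNReal.ofReal (L φ₀.1) := by
              gcongr
              exact_mod_cast le_trans Finset.card_image_le
                (le_of_eq (Finset.card_product _ _))
        _ = (φ.dom.card : ℝ≥0∞) * ENNReal.ofReal ((φ₀.1.dom.card:ℝ) * L φ₀.1) := by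
              rw [ENNReal.ofReal_mul (by positivity), ENNReal.ofReal_natCast]
              push_cast
              ring
    _ = (φ.dom.card : ℝ≥0∞) * S := by rw [ENNReal.tsum_mul_left]
  have hhB : h < B := by
    have h1 : ENNReal.ofReal h < ENNReal.ofReal B :=
      lt_of_le_of_lt le_self_add hsum
    exact (ENNReal.ofReal_lt_ofReal_iff_of_nonneg hh.le).1 h1
  have hS_le : S ≤ ENNReal.ofReal (B - h) := by
    have h1 : ENNReal.ofReal h + S ≤ ENNReal.ofReal h + ENNReal.ofReal (B - h) := by
      rw [← ENNReal.ofReal_add hh.le (by linarith), show h + (B - h) = B by ring]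
      exact hsum.le
    exact (ENNReal.add_le_add_iff_left ENNReal.ofReal_ne_top).1 h1
  have hT2 : ∑' ψ : N, ENNReal.ofReal (L ψ.1) ≤ ENNReal.ofReal ((φ.dom.card:ℝ) * (B - h)) := by
    calc ∑' ψ : N, ENNReal.ofReal (L ψ.1) ≤ (φ.dom.card : ℝ≥0∞) * S := hT1
    _ ≤ (φ.dom.card : ℝ≥0∞) * ENNReal.ofReal (B - h) := by gcongr
    _ = _ := by rw [← ENNReal.ofReal_natCast, ← ENNReal.ofReal_mul (by positivity)]
  have hTne : ∑' ψ : N, ENNReal.ofReal (L ψ.1) ≠ ⊤ := (hT2.trans_lt ENNReal.ofReal_lt_top).ne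
  have hsummL : Summable (fun ψ : N => L ψ.1) := by
    have h1 := ENNReal.summable_toReal hTne
    refine h1.congr fun ψ => ?_
    exact ENNReal.toReal_ofReal (hL_nonneg _)
  set SR : ℝ := ∑' ψ : N, L ψ.1 with hSRdef
  have hSR_eq : ENNReal.ofReal SR = ∑' ψ : N, ENNReal.ofReal (L ψ.1) :=
    ENNReal.ofReal_tsum_of_nonneg (fun ψ => hL_nonneg _) hsummL
  have hSR_le : SR ≤ (φ.dom.card:ℝ) * (B - h) := by
    refine (ENNReal.ofReal_le_ofReal_iff ?_).1 (hSR_eq ▸ hT2)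
    have : (0:ℝ) ≤ B - h := by linarith
    positivity
  have hlog2 : (0:ℝ) < Real.log 2 := Real.log_pos h2
  have hlogf : ∀ ψ : N, Real.log (f ψ.1) = -(L ψ.1 * Real.log 2) := by
    intro ψ
    rw [hLval, Real.logb, neg_mul, neg_neg, div_mul_cancel₀ _ (ne_of_gt hlog2)]
  have hHasSum : HasSum (fun ψ : N => Real.log (f ψ.1)) (-(SR * Real.log 2)) := by
    have h1 := (hsummL.hasSum.mul_right (Real.log 2)).neg
    have h2' : (fun ψ : N => Real.log (f ψ.1)) = fun ψ : N => -(L ψ.1 * Real.log 2) :=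
      funext hlogf
    rw [h2']
    exact h1
  have hHasProd : HasProd (fun ψ : N => f ψ.1) (Real.exp (-(SR * Real.log 2))) := by
    have h1 := hHasSum.rexp
    have h2' : (Real.exp ∘ fun ψ : N => Real.log (f ψ.1)) = fun ψ : N => f ψ.1 :=
      funext fun ψ => Real.exp_log (hf_pos ψ.1)
    rwa [h2'] at h1
  have hprod_eq : ∏' ψ : N, f ψ.1 = Real.exp (-(SR * Real.log 2)) := hHasProd.tprod_eq
  have hexp_ge : (2:ℝ) ^ (-((φ.dom.card:ℝ) * (B - h))) ≤ Real.exp (-(SR * Real.log 2)) := by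
    rw [Real.rpow_def_of_pos two_pos]
    apply Real.exp_le_exp.2
    nlinarith
  have hk0 : (0:ℝ) < k := by
    have : (2:ℝ) ≤ k := by exact_mod_cast hk
    linarith
  have h2B : (2:ℝ) ^ B = k := Real.rpow_logb two_pos (by norm_num) hk0
  have hgoal : ∏' ψ : N, f ψ.1 =
      ∏' ψ : nbhd φ (orbitOf Φ), (1 - (2 : ℝ) ^ (-(h * ((ψ.1.dom.card : ℝ))))) := rfl
  rw [← hgoal]
  calc ((k : ℝ))⁻¹ ^ φ.dom.card = (2:ℝ) ^ (-((φ.dom.card:ℝ) * B)) := by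
        rw [inv_pow, ← Real.rpow_natCast (k:ℝ), ← Real.rpow_neg hk0.le, ← h2B,
          ← Real.rpow_mul (by norm_num : (0:ℝ) ≤ 2)]
        ring_nf
  _ = (2:ℝ) ^ (-(h * (φ.dom.card:ℝ))) * (2:ℝ) ^ (-((φ.dom.card:ℝ) * (B - h))) := by
        rw [← Real.rpow_add two_pos]
        ring_nf
  _ ≤ (2:ℝ) ^ (-(h * (φ.dom.card:ℝ))) * ∏' ψ : N, f ψ.1 := by
        rw [hprod_eq]
        exact mul_le_mul_of_nonneg_left hexp_ge (le_of_lt (Real.rpow_pos_of_pos two_pos _))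
end

section
/- Let ℱ be a finite family of basic open subsets of k^Γ with 𝔴(ℱ) < h, and let N distinct 'spread-out' translates be chosen: elements γ₁,…,γ_N ∈ Γ such that dom(φ)γᵢ ∩ dom(ψ)γⱼ = ∅ for all defining patterns φ, ψ of sets in ℱ and i ≠ j. Then for all U₁,…,U_N ∈ ℱ, the set ⋂_{i=1}^N γᵢ^{−1}·Uᵢ is a basic open set with d(⋂_{i=1}^N γᵢ^{−1}·Uᵢ) = ∏_{i=1}^N d(Uᵢ), and σ_h of the family 𝒱 := {⋂_{i=1}^N γᵢ^{−1}·Uᵢ : Uᵢ ∈ ℱ} satisfies σ_h(𝒱) ≤ c₁c₂ · N · ρ_h(ℱ)^N, where c₁ := max{|log₂ d(U)| : U ∈ ℱ}, c₂ := 2^h·|log₂(1−2^{−h})|, and hence σ_h(𝒱) → 0 as N → ∞ (since ρ_h(ℱ) < 1). -/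
open scoped ENNReal

/-- `σ_h(U_φ) := log₂ d(U_φ) · log₂(1 − d(U_φ)^h)` (a positive quantity). -/
noncomputable def sigma {Γ : Type*} {k : ℕ} (h : ℝ) (φ : Pattern Γ k) : ℝ :=
  Real.logb 2 φ.dR * Real.logb 2 (1 - φ.dR ^ h)

private lemma neg_logb_one_sub_le {b a : ℝ} (hb0 : 0 < b) (hb1 : b < 1)
    (ha0 : 0 ≤ a) (hab : a ≤ b) :
    -Real.logb 2 (1 - a) ≤ b⁻¹ * (-Real.logb 2 (1 - b)) * a := by
  have h1a : 0 < 1 - a := by linarith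
  have h1b : 0 < 1 - b := by linarith
  have hp0 : 0 ≤ a / b := div_nonneg ha0 hb0.le
  have hp1 : a / b ≤ 1 := (div_le_one hb0).2 hab
  have hbern : (1 - b) ^ (a / b) ≤ 1 - a := by
    have h := rpow_one_add_le_one_add_mul_self (s := -b) (by linarith) hp0 hp1
    have hab' : a / b * -b = -a := by field_simp
    rw [hab'] at h
    simpa [sub_eq_add_neg] using h
  have hlog : (a / b) * Real.logb 2 (1 - b) ≤ Real.logb 2 (1 - a) := by
    have h2 : Real.logb 2 ((1 - b) ^ (a / b)) ≤ Real.logb 2 (1 - a) :=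
      Real.logb_le_logb_of_le (by norm_num) (Real.rpow_pos_of_pos h1b _) hbern
    rwa [Real.logb_rpow_eq_mul_logb_of_pos h1b] at h2
  have he : b⁻¹ * -Real.logb 2 (1 - b) * a = -(a / b * Real.logb 2 (1 - b)) := by
    rw [div_eq_mul_inv]; ring
  linarith

/-- Let `ℱ` be a finite nonempty family of basic open sets with `𝔴(ℱ) < h`, and let
`γ₁, …, γ_N` be "spread-out": `dom(φ)γᵢ ∩ dom(ψ)γⱼ = ∅` for all defining patterns `φ, ψ`
of `ℱ` and `i ≠ j`. Then each `⋂ᵢ γᵢ⁻¹·Uᵢ` (for `U₁, …, U_N ∈ ℱ`) is a basic open set of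
value `d = ∏ᵢ d(Uᵢ)`, and the family `𝒱` of all such intersections satisfies
`σ_h(𝒱) ≤ c₁c₂·N·ρ_h(ℱ)^N`, where `c₁ = max_{U ∈ ℱ} |log₂ d(U)|` and
`c₂ = 2^h·|log₂(1 − 2^{−h})|`. -/
theorem sigma_of_spread_intersections
    {Γ : Type*} [Group Γ] [DecidableEq Γ] [Countable Γ] [Infinite Γ] {k : ℕ} (hk : 2 ≤ k)
    (ℱ : Finset (Pattern Γ k)) (hFne : ℱ.Nonempty) (h : ℝ) (hh : 0 < h)
    (hw : famWidth (ℱ : Set (Pattern Γ k)) < ENNReal.ofReal h)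
    (N : ℕ) (hN : 0 < N) (γ : Fin N → Γ)
    (hspread : ∀ φ ∈ ℱ, ∀ ψ ∈ ℱ, ∀ i j : Fin N, i ≠ j →
      Disjoint (φ.dom.image (· * γ i)) (ψ.dom.image (· * γ j))) :
    ∃ P : (Fin N → ↥ℱ) → Pattern Γ k,
      (∀ u : Fin N → ↥ℱ,
        (P u).cylinder = ⋂ i : Fin N, (patShift (γ i)⁻¹ (u i : Pattern Γ k)).cylinder) ∧
      (∀ u : Fin N → ↥ℱ, (P u).dR = ∏ i : Fin N, (u i : Pattern Γ k).dR) ∧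
      ∑ u : Fin N → ↥ℱ, sigma h (P u) ≤
        (ℱ.sup' hFne fun φ => |Real.logb 2 φ.dR|) *
          ((2 : ℝ) ^ h * |Real.logb 2 (1 - (2 : ℝ) ^ (-h))|) * N *
          (∑ φ ∈ ℱ, φ.dR ^ h) ^ N := by
  
  classical
  have hk0 : 0 < k := by omega
  -- uniqueness of translate index
  have huniq : ∀ (u : Fin N → ↥ℱ) (δ : Γ) (i j : Fin N),
      δ * (γ i)⁻¹ ∈ (u i : Pattern Γ k).dom → δ * (γ j)⁻¹ ∈ (u j : Pattern Γ k).dom → i = j := by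
    intro u δ i j hi hj
    by_contra hij
    have hd := hspread _ (u i).2 _ (u j).2 i j hij
    have h1 : δ ∈ (u i : Pattern Γ k).dom.image (· * γ i) :=
      Finset.mem_image.2 ⟨_, hi, by group⟩
    have h2 : δ ∈ (u j : Pattern Γ k).dom.image (· * γ j) :=
      Finset.mem_image.2 ⟨_, hj, by group⟩
    exact (Finset.disjoint_left.1 hd h1) h2
  set dm : (Fin N → ↥ℱ) → Finset Γ := fun u =>
    Finset.univ.biUnion fun i => ((u i : Pattern Γ k)).dom.image (· * γ i) with hdm
  have hmem : ∀ (u : Fin N → ↥ℱ) (δ : Γ),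
      δ ∈ dm u ↔ ∃ i, δ * (γ i)⁻¹ ∈ (u i : Pattern Γ k).dom := by
    intro u δ
    simp only [hdm, Finset.mem_biUnion, Finset.mem_univ, true_and, Finset.mem_image]
    constructor
    · rintro ⟨i, g, hg, rfl⟩
      exact ⟨i, by simpa using hg⟩
    · rintro ⟨i, hi⟩
      exact ⟨i, _, hi, by group⟩
  have hdmne : ∀ u, (dm u).Nonempty := by
    intro u
    obtain ⟨g, hg⟩ := (u ⟨0, hN⟩ : Pattern Γ k).dom_nonempty
    exact ⟨g * γ ⟨0, hN⟩, (hmem u _).2 ⟨⟨0, hN⟩, by rwa [mul_inv_cancel_right]⟩⟩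
  set vl : (Fin N → ↥ℱ) → Γ → Fin k := fun u δ =>
    if hδ : ∃ i, δ * (γ i)⁻¹ ∈ (u i : Pattern Γ k).dom
    then ((u hδ.choose : Pattern Γ k)).val (δ * (γ hδ.choose)⁻¹) else ⟨0, hk0⟩ with hvl
  have hval : ∀ (u : Fin N → ↥ℱ) (δ : Γ) (i : Fin N), δ * (γ i)⁻¹ ∈ (u i : Pattern Γ k).dom →
      vl u δ = (u i : Pattern Γ k).val (δ * (γ i)⁻¹) := by
    intro u δ i hi
    have hδ : ∃ j, δ * (γ j)⁻¹ ∈ (u j : Pattern Γ k).dom := ⟨i, hi⟩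
    have hji := huniq u δ hδ.choose i hδ.choose_spec hi
    rw [hvl]
    simp only [dif_pos hδ]
    rw [hji]
  set P : (Fin N → ↥ℱ) → Pattern Γ k := fun u => ⟨dm u, hdmne u, vl u⟩ with hP
  -- cardinality
  have hcard : ∀ u, (dm u).card = ∑ i, ((u i : Pattern Γ k)).dom.card := by
    intro u
    rw [hdm]
    rw [Finset.card_biUnion (fun i _ j _ hij => hspread _ (u i).2 _ (u j).2 i j hij)]
    exact Finset.sum_congr rfl fun i _ =>
      Finset.card_image_of_injective _ (mul_left_injective _)
  have hdR : ∀ u, (P u).dR = ∏ i, (u i : Pattern Γ k).dR := by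
    intro u
    simp only [hP, Pattern.dR, hcard u]
    rw [← Finset.prod_pow_eq_pow_sum]
  refine ⟨P, ?_, hdR, ?_⟩
  · -- cylinder equality
    intro u
    ext x
    simp only [hP, Pattern.cylinder, patShift, Set.mem_iInter, Set.mem_setOf_eq, inv_inv]
    constructor
    · intro hx i g hg
      obtain ⟨a, ha, rfl⟩ := Finset.mem_image.1 hg
      have hai : (a * γ i) * (γ i)⁻¹ ∈ (u i : Pattern Γ k).dom := by rwa [mul_inv_cancel_right]
      have hm : a * γ i ∈ dm u := (hmem u _).2 ⟨i, hai⟩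
      rw [hx _ hm, hval u _ i hai]
    · intro hx δ hδ
      obtain ⟨i, hi⟩ := (hmem u δ).1 hδ
      rw [hval u δ i hi]
      exact hx i δ (Finset.mem_image.2 ⟨_, hi, by rw [inv_mul_cancel_right]⟩)
  · -- the estimate
    set c₁ := ℱ.sup' hFne fun φ => |Real.logb 2 φ.dR| with hc₁
    set c₂ := (2 : ℝ) ^ h * |Real.logb 2 (1 - (2 : ℝ) ^ (-h))| with hc₂
    have hlogdR : ∀ φ : Pattern Γ k, Real.logb 2 φ.dR = -(φ.dom.card : ℝ) := by
      intro φ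
      rw [Pattern.dR, Real.logb_pow, Real.logb_inv,
        Real.logb_self_eq_one (by norm_num)]
      ring
    have hc₁0 : 0 ≤ c₁ := by
      obtain ⟨φ, hφ⟩ := hFne
      rw [hc₁]
      exact le_trans (abs_nonneg _)
        (Finset.le_sup' (fun φ : Pattern Γ k => |Real.logb 2 φ.dR|) hφ)
    have hb0 : (0 : ℝ) < (2 : ℝ) ^ (-h) := Real.rpow_pos_of_pos (by norm_num) _
    have hb1 : (2 : ℝ) ^ (-h) < 1 :=
      Real.rpow_lt_one_of_one_lt_of_neg (by norm_num) (by linarith)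
    have hc₂0 : 0 ≤ c₂ := mul_nonneg (Real.rpow_nonneg (by norm_num) _) (abs_nonneg _)
    -- per-u bound
    have hperu : ∀ u : Fin N → ↥ℱ,
        sigma h (P u) ≤ c₁ * c₂ * N * ∏ i, ((u i : Pattern Γ k).dR ^ h) := by
      intro u
      set M := ∑ i, ((u i : Pattern Γ k)).dom.card with hM
      have hdRP : (P u).dR = (2 : ℝ)⁻¹ ^ M := by
        simp only [hP, Pattern.dR, hcard u, hM]
      have hM1 : 1 ≤ M := by
        calc 1 ≤ N := hN
        _ = ∑ _i : Fin N, 1 := by simp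
        _ ≤ M := Finset.sum_le_sum fun i _ =>
            Finset.card_pos.2 (u i : Pattern Γ k).dom_nonempty
      have hd0 : (0 : ℝ) < (P u).dR := by
        rw [hdRP]; positivity
      have hdhalf : (P u).dR ≤ 2⁻¹ := by
        rw [hdRP]
        calc ((2 : ℝ)⁻¹) ^ M ≤ (2 : ℝ)⁻¹ ^ 1 :=
          pow_le_pow_of_le_one (by norm_num) (by norm_num) hM1
        _ = 2⁻¹ := pow_one _
      have hdh0 : (0 : ℝ) < (P u).dR ^ h := Real.rpow_pos_of_pos hd0 _
      have hdhle : (P u).dR ^ h ≤ (2 : ℝ) ^ (-h) := by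
        rw [Real.rpow_neg (by norm_num), ← Real.inv_rpow (by norm_num)]
        exact Real.rpow_le_rpow hd0.le hdhalf hh.le
      -- bound on -logb(1 - d^h)
      have hB := neg_logb_one_sub_le hb0 hb1 hdh0.le hdhle
      have hinv : ((2 : ℝ) ^ (-h))⁻¹ = (2 : ℝ) ^ h := by
        rw [Real.rpow_neg (by norm_num), inv_inv]
      have habs : -Real.logb 2 (1 - (2 : ℝ) ^ (-h)) = |Real.logb 2 (1 - (2 : ℝ) ^ (-h))| := by
        rw [abs_of_nonpos (Real.logb_nonpos (by norm_num) (by linarith) (by linarith))]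
      rw [hinv, habs] at hB
      -- bound M ≤ N * c₁
      have hMc : (M : ℝ) ≤ N * c₁ := by
        rw [hM]
        push_cast
        calc ∑ i : Fin N, (((u i : Pattern Γ k)).dom.card : ℝ)
            ≤ ∑ _i : Fin N, c₁ := by
              refine Finset.sum_le_sum fun i _ => ?_
              rw [hc₁]
              have := Finset.le_sup' (fun φ : Pattern Γ k => |Real.logb 2 φ.dR|) (u i).2
              rwa [hlogdR, abs_neg, abs_of_nonneg (by positivity)] at this
        _ = N * c₁ := by simp [mul_comm]
      have hBnn : 0 ≤ -Real.logb 2 (1 - (P u).dR ^ h) := by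
        have : (P u).dR ^ h ≤ 1 := le_trans hdhle hb1.le
        have hpos : (0:ℝ) < 1 - (P u).dR ^ h := by
          have : (P u).dR ^ h < 1 := lt_of_le_of_lt hdhle hb1
          linarith
        have := Real.logb_nonpos (b := 2) (by norm_num) hpos.le (by linarith)
        linarith
      have hsig : sigma h (P u) = (M : ℝ) * (-Real.logb 2 (1 - (P u).dR ^ h)) := by
        have hc : (P u).dom.card = M := by simp only [hP]; rw [hcard u]
        rw [sigma, hlogdR, hc]; ring
      rw [hsig]
      calc (M : ℝ) * (-Real.logb 2 (1 - (P u).dR ^ h))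
          ≤ (N * c₁) * (c₂ * (P u).dR ^ h) := by
            apply mul_le_mul hMc ?_ hBnn (by positivity)
            calc -Real.logb 2 (1 - (P u).dR ^ h)
                ≤ (2:ℝ) ^ h * |Real.logb 2 (1 - (2:ℝ) ^ (-h))| * ((P u).dR ^ h) := hB
            _ = c₂ * (P u).dR ^ h := by rw [hc₂]
      _ = c₁ * c₂ * N * ((P u).dR ^ h) := by ring
      _ = c₁ * c₂ * N * ∏ i, ((u i : Pattern Γ k).dR ^ h) := by
            rw [hdR u, ← Real.finset_prod_rpow _ _ (fun i _ => by
              have : (0:ℝ) < (u i : Pattern Γ k).dR := by rw [Pattern.dR]; positivity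
              exact this.le) h]
    -- sum up
    calc ∑ u : Fin N → ↥ℱ, sigma h (P u)
        ≤ ∑ u : Fin N → ↥ℱ, c₁ * c₂ * N * ∏ i, ((u i : Pattern Γ k).dR ^ h) :=
          Finset.sum_le_sum fun u _ => hperu u
    _ = c₁ * c₂ * N * ∑ u : Fin N → ↥ℱ, ∏ i, ((u i : Pattern Γ k).dR ^ h) := by
          rw [Finset.mul_sum]
    _ = c₁ * c₂ * N * (∑ φ ∈ ℱ, φ.dR ^ h) ^ N := by
          congr 1
          calc ∑ u : Fin N → ↥ℱ, ∏ i, ((u i : Pattern Γ k).dR ^ h)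
              = ∑ u ∈ Fintype.piFinset (fun _ : Fin N => (Finset.univ : Finset ↥ℱ)),
                  ∏ i, ((u i : Pattern Γ k).dR ^ h) := by rw [Fintype.piFinset_univ]
          _ = ∏ _i : Fin N, ∑ φ : ↥ℱ, ((φ : Pattern Γ k).dR ^ h) :=
                (Finset.prod_univ_sum (fun _ : Fin N => (Finset.univ : Finset ↥ℱ))
                  (fun _ φ => (φ : Pattern Γ k).dR ^ h)).symm
          _ = (∑ φ : ↥ℱ, ((φ : Pattern Γ k).dR ^ h)) ^ N := by
                rw [Finset.prod_const, Finset.card_univ, Fintype.card_fin]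
          _ = (∑ φ ∈ ℱ, φ.dR ^ h) ^ N := by
                rw [Finset.univ_eq_attach, Finset.sum_attach ℱ (fun φ => φ.dR ^ h)]
end

section
/- Let ℱ be a finite family of basic open subsets of k^Γ with 𝔴(ℱ) < h. Then for every ε > 0 there exists a family 𝒱 of basic open sets with σ_h(𝒱) < ε such that every x ∈ k^Γ whose entire left orbit Γ·x is contained in ⋃ℱ satisfies x ∈ ⋃𝒱. -/
open scoped ENNReal

section Aux

lemma exists_disjoint_translates {Γ : Type*} [Group Γ] [Infinite Γ] [DecidableEq Γ]
    (D : Finset Γ) (N : ℕ) :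
    ∃ γ : Fin N → Γ, ∀ i j : Fin N, i ≠ j →
      Disjoint (D.image (· * γ i)) (D.image (· * γ j)) := by
  induction N with
  | zero => exact ⟨Fin.elim0, fun i => i.elim0⟩
  | succ N ih =>
    obtain ⟨γ, hγ⟩ := ih
    obtain ⟨g, hg⟩ := Infinite.exists_notMem_finset
      ((Finset.univ : Finset (Fin N)).biUnion fun i =>
        D.biUnion fun a => (D.image (· * γ i)).image fun b => a⁻¹ * b)
    have key : ∀ i : Fin N, Disjoint (D.image (· * g)) (D.image (· * γ i)) := by
      intro i
      rw [Finset.disjoint_left]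
      rintro x hx hx'
      obtain ⟨a, ha, rfl⟩ := Finset.mem_image.1 hx
      apply hg
      refine Finset.mem_biUnion.2 ⟨i, Finset.mem_univ _, ?_⟩
      refine Finset.mem_biUnion.2 ⟨a, ha, ?_⟩
      exact Finset.mem_image.2 ⟨a * g, hx', by group⟩
    refine ⟨Fin.cons g γ, ?_⟩
    intro i j hij
    induction i using Fin.cases with
    | zero =>
      induction j using Fin.cases with
      | zero => exact absurd rfl hij
      | succ j' => simpa using key j'
    | succ i' =>
      induction j using Fin.cases with
      | zero => simpa using (key i').symm
      | succ j' =>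
        have hne : i' ≠ j' := by rintro rfl; exact hij rfl
        simpa using hγ i' j' hne

lemma neg_logb_le_aux {u : ℝ} (h0 : 0 ≤ u) (h2 : u ≤ 1/2) :
    -Real.logb 2 (1 - u) ≤ 2 * u / Real.log 2 := by
  have hpos : (0:ℝ) < 1 - u := by linarith
  have hlog2 : 0 < Real.log 2 := Real.log_pos (by norm_num)
  have h1 : -Real.log (1 - u) ≤ 2 * u := by
    have hle := Real.log_le_sub_one_of_pos (inv_pos.2 hpos)
    rw [Real.log_inv] at hle
    have hinv : (1 - u)⁻¹ - 1 = u / (1 - u) := by field_simp; ring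
    have hd : u / (1 - u) ≤ 2 * u := by
      rw [div_le_iff₀ hpos]; nlinarith
    linarith [hle.trans_eq hinv |>.trans hd]
  rw [Real.logb, ← neg_div]
  exact div_le_div_of_nonneg_right h1 hlog2.le

section interPat
variable {Γ : Type*} [Group Γ] [DecidableEq Γ] {k N : ℕ}

/-- The pattern whose cylinder contains `⋂ i, (γ i)⁻¹ · U_{t i}`
(given disjoint translated domains). -/
noncomputable def interPat (hk0 : 0 < k) (hN : 0 < N) (γ : Fin N → Γ)
    (t : Fin N → Pattern Γ k) : Pattern Γ k where
  dom := Finset.univ.biUnion fun i => (t i).dom.image (· * γ i)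
  dom_nonempty := by
    obtain ⟨i⟩ := Fin.pos_iff_nonempty.1 hN
    obtain ⟨g, hg⟩ := (t i).dom_nonempty
    exact ⟨g * γ i, Finset.mem_biUnion.2 ⟨i, Finset.mem_univ _, Finset.mem_image_of_mem _ hg⟩⟩
  val := fun δ =>
    if hi : ∃ i : Fin N, δ ∈ (t i).dom.image (· * γ i) then
      (t hi.choose).val (δ * (γ hi.choose)⁻¹)
    else ⟨0, hk0⟩

variable {hk0 : 0 < k} {hN : 0 < N} {γ : Fin N → Γ} {t : Fin N → Pattern Γ k}

/-- Pairwise disjointness of the translated domains. -/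
def PDisj (γ : Fin N → Γ) (t : Fin N → Pattern Γ k) : Prop := ∀ i j : Fin N, i ≠ j →
    Disjoint ((t i).dom.image (· * γ i)) ((t j).dom.image (· * γ j))

lemma interPat_card (hdisj : PDisj γ t) :
    (interPat hk0 hN γ t).dom.card = ∑ i, (t i).dom.card := by
  rw [interPat, Finset.card_biUnion fun i _ j _ hij => hdisj i j hij]
  exact Finset.sum_congr rfl fun i _ =>
    Finset.card_image_of_injective _ (mul_left_injective (γ i))

lemma interPat_val (hdisj : PDisj γ t) {i : Fin N} {g : Γ} (hg : g ∈ (t i).dom) :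
    (interPat hk0 hN γ t).val (g * γ i) = (t i).val g := by
  have hmem : g * γ i ∈ (t i).dom.image (· * γ i) := Finset.mem_image_of_mem _ hg
  have hex : ∃ j, g * γ i ∈ (t j).dom.image (· * γ j) := ⟨i, hmem⟩
  rw [interPat]
  simp only [dif_pos hex]
  have hj : hex.choose = i := by
    by_contra hne
    exact (Finset.disjoint_left.1 (hdisj _ _ hne) hex.choose_spec) hmem
  rw [hj, mul_inv_cancel_right]

lemma interPat_mem (hdisj : PDisj γ t) {x : Γ → Fin k}
    (hx : ∀ i, lshift (γ i) x ∈ (t i).cylinder) :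
    x ∈ (interPat hk0 hN γ t).cylinder := by
  intro δ hδ
  obtain ⟨i, -, hδi⟩ := Finset.mem_biUnion.1 hδ
  obtain ⟨g, hg, rfl⟩ := Finset.mem_image.1 hδi
  rw [interPat_val hdisj hg]
  exact hx i g hg

end interPat

end Aux

/-- Let `ℱ` be a finite family of basic open sets with `𝔴(ℱ) < h`. Then for every `ε > 0`
there is a family `𝒱` of basic open sets with `σ_h(𝒱) < ε` such that every `x ∈ k^Γ` whose
entire left orbit `Γ·x` is contained in `⋃ℱ` lies in `⋃𝒱`. -/
theorem exists_small_sigma_family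
    {Γ : Type*} [Group Γ] [DecidableEq Γ] [Countable Γ] [Infinite Γ] {k : ℕ} (hk : 2 ≤ k)
    (ℱ : Finset (Pattern Γ k)) (h : ℝ) (hh : 0 < h)
    (hw : famWidth (ℱ : Set (Pattern Γ k)) < ENNReal.ofReal h)
    (ε : ℝ) (hε : 0 < ε) :
    ∃ 𝒱 : Set (Pattern Γ k),
      (∑' φ : 𝒱, ENNReal.ofReal (sigma h φ.1)) < ENNReal.ofReal ε ∧
      ∀ x : Γ → Fin k, (∀ γ : Γ, lshift γ x ∈ ⋃ φ ∈ ℱ, Pattern.cylinder φ) →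
        x ∈ ⋃ φ ∈ 𝒱, Pattern.cylinder φ := by
  classical
  have hk0 : 0 < k := by omega
  rcases ℱ.eq_empty_or_nonempty with rfl | hF
  · refine ⟨∅, ?_, ?_⟩
    · rw [tsum_empty]; exact ENNReal.ofReal_pos.2 hε
    · intro x hx; simpa using hx 1
  have hlog2 : 0 < Real.log 2 := Real.log_pos (by norm_num)
  have dRpos : ∀ φ : Pattern Γ k, 0 < φ.dR := fun φ => pow_pos (by norm_num) _
  have dE_eq : ∀ φ : Pattern Γ k, φ.dE = ENNReal.ofReal φ.dR := by
    intro φ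
    rw [Pattern.dE, Pattern.dR, ENNReal.ofReal_pow (by norm_num)]
    congr 1
    rw [ENNReal.ofReal_inv_of_pos (by norm_num : (0:ℝ) < 2)]
    norm_num
  obtain ⟨w, hwmem, hwlt⟩ := sInf_lt_iff.1 hw
  obtain ⟨h', h'0, rfl, hsumE⟩ := hwmem
  have hh' : h' < h := by rwa [ENNReal.ofReal_lt_ofReal_iff hh] at hwlt
  have hsum' : ∑ U ∈ ℱ, U.dR ^ h' ≤ 1 := by
    have hE : (∑ U ∈ ℱ, U.dE ^ h') ≤ 1 :=
      le_of_eq_of_le (Finset.tsum_subtype' ℱ fun U => U.dE ^ h').symm hsumE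
    rw [Finset.sum_congr rfl (fun U _ => by rw [dE_eq, ENNReal.ofReal_rpow_of_pos (dRpos U)]),
      ← ENNReal.ofReal_sum_of_nonneg (fun U _ => Real.rpow_nonneg (dRpos U).le _)] at hE
    exact ENNReal.ofReal_le_one.1 hE
  set s : ℝ := ∑ U ∈ ℱ, U.dR ^ h with hs_def
  have hs0 : 0 ≤ s := Finset.sum_nonneg fun U _ => Real.rpow_nonneg (dRpos U).le _
  have hs1 : s < 1 := by
    have hcl : (2:ℝ)⁻¹ ^ (h - h') < 1 :=
      Real.rpow_lt_one (by norm_num) (by norm_num) (by linarith)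
    have hbound : ∀ U ∈ ℱ, U.dR ^ h ≤ (2:ℝ)⁻¹ ^ (h - h') * U.dR ^ h' := by
      intro U _
      have h1 : U.dR ^ h = U.dR ^ (h - h') * U.dR ^ h' := by
        rw [← Real.rpow_add (dRpos U)]; ring_nf
      rw [h1]
      refine mul_le_mul_of_nonneg_right ?_ (Real.rpow_nonneg (dRpos U).le _)
      refine Real.rpow_le_rpow (dRpos U).le ?_ (by linarith)
      calc U.dR ≤ (2:ℝ)⁻¹ ^ 1 := by
            rw [Pattern.dR]
            exact pow_le_pow_of_le_one (by norm_num) (by norm_num)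
              (Finset.card_pos.2 U.dom_nonempty)
      _ = 2⁻¹ := pow_one _
    calc s ≤ ∑ U ∈ ℱ, (2:ℝ)⁻¹ ^ (h - h') * U.dR ^ h' := Finset.sum_le_sum hbound
    _ = (2:ℝ)⁻¹ ^ (h - h') * ∑ U ∈ ℱ, U.dR ^ h' := by rw [Finset.mul_sum]
    _ ≤ (2:ℝ)⁻¹ ^ (h - h') * 1 :=
        mul_le_mul_of_nonneg_left hsum' (Real.rpow_nonneg (by norm_num) _)
    _ < 1 := by rw [mul_one]; exact hcl
  set B : ℕ := ℱ.sup fun U => U.dom.card with hB_def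
  have htend : Filter.Tendsto (fun n : ℕ => 2 * (B:ℝ) / Real.log 2 * ((n:ℝ) * s ^ n))
      Filter.atTop (nhds 0) := by
    have h0 := tendsto_pow_const_mul_const_pow_of_lt_one 1 hs0 hs1
    have h1 := h0.const_mul (2 * (B:ℝ) / Real.log 2)
    simpa using h1
  obtain ⟨N₀, hN₀⟩ := Filter.eventually_atTop.1 (htend.eventually_lt_const hε)
  set N := max N₀ (max 1 ⌈1/h⌉₊) with hN_def
  have hN1 : 0 < N := lt_of_lt_of_le one_pos (le_max_of_le_right (le_max_left _ _))
  have hNh : 1 ≤ (N:ℝ) * h := by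
    have h1 : 1/h ≤ (⌈1/h⌉₊:ℝ) := Nat.le_ceil _
    have h2 : ((⌈1/h⌉₊:ℕ):ℝ) ≤ (N:ℝ) := Nat.cast_le.2 (le_max_of_le_right (le_max_right _ _))
    rw [div_le_iff₀ hh] at h1
    nlinarith [hh.le]
  have hNbound := hN₀ N (le_max_left _ _)
  obtain ⟨γ, hγ⟩ := exists_disjoint_translates (ℱ.biUnion Pattern.dom) N
  set Pt : (Fin N → {U // U ∈ ℱ}) → Pattern Γ k :=
    fun t => interPat hk0 hN1 γ (fun i => (t i).1) with hPt_def
  have hdisj : ∀ t : Fin N → {U // U ∈ ℱ}, PDisj γ (fun i => (t i).1) := by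
    intro t i j hij
    exact Disjoint.mono
      (Finset.image_subset_image (Finset.subset_biUnion_of_mem Pattern.dom (t i).2))
      (Finset.image_subset_image (Finset.subset_biUnion_of_mem Pattern.dom (t j).2))
      (hγ i j hij)
  refine ⟨Set.range Pt, ?_, ?_⟩
  · have hsurj : Function.Surjective
        (fun t : (Fin N → {U // U ∈ ℱ}) =>
          (⟨Pt t, Set.mem_range_self t⟩ : Set.range Pt)) := by
      rintro ⟨-, t, rfl⟩; exact ⟨t, rfl⟩
    have h1 : (∑' φ : (Set.range Pt : Set (Pattern Γ k)), ENNReal.ofReal (sigma h φ.1))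
        ≤ ∑ tu : Fin N → {U // U ∈ ℱ}, ENNReal.ofReal (sigma h (Pt tu)) := by
      refine le_trans (ENNReal.tsum_le_tsum_comp_of_surjective hsurj
        (fun φ : Set.range Pt => ENNReal.ofReal (sigma h φ.1))) ?_
      rw [tsum_fintype]
    have hpt : ∀ tu : Fin N → {U // U ∈ ℱ},
        sigma h (Pt tu) ≤ ((N:ℝ) * (B:ℝ)) * (2 * (∏ i, ((tu i).1.dR ^ h)) / Real.log 2) := by
      intro tu
      set M := (Pt tu).dom.card with hM_def
      have hM_eq : M = ∑ i, ((tu i).1.dom).card := interPat_card (hdisj tu)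
      have hMN : N ≤ M := by
        rw [hM_eq]
        calc N = ∑ _i : Fin N, 1 := by simp
        _ ≤ _ := Finset.sum_le_sum fun i _ => Finset.card_pos.2 (tu i).1.dom_nonempty
      have hMB : (M:ℝ) ≤ (N:ℝ) * (B:ℝ) := by
        have hnat : M ≤ N * B := by
          rw [hM_eq]
          calc ∑ i, ((tu i).1.dom).card ≤ ∑ _i : Fin N, B :=
              Finset.sum_le_sum fun i _ => Finset.le_sup (f := fun U : Pattern Γ k => U.dom.card) (tu i).2
          _ = N * B := by simp [Finset.sum_const, Finset.card_univ, mul_comm]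
        exact_mod_cast hnat
      have hdR : (Pt tu).dR = (2:ℝ)⁻¹ ^ M := rfl
      have hprod : (Pt tu).dR ^ h = ∏ i, ((tu i).1.dR ^ h) := by
        rw [hdR, hM_eq, ← Finset.prod_pow_eq_pow_sum,
          ← Real.finset_prod_rpow _ _ (fun i _ => by positivity) h]
        rfl
      set u := (Pt tu).dR ^ h with hu_def
      have hu0 : 0 ≤ u := Real.rpow_nonneg (dRpos _).le _
      have hu2 : u ≤ 1/2 := by
        have e1 : u ≤ ((2:ℝ)⁻¹ ^ N) ^ h := by
          rw [hu_def, hdR]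
          exact Real.rpow_le_rpow (by positivity)
            (pow_le_pow_of_le_one (by norm_num) (by norm_num) hMN) hh.le
        have e2 : ((2:ℝ)⁻¹ ^ N) ^ h = (2:ℝ)⁻¹ ^ ((N:ℝ) * h) := by
          rw [← Real.rpow_natCast (2:ℝ)⁻¹ N, ← Real.rpow_mul (by norm_num)]
        have e3 : (2:ℝ)⁻¹ ^ ((N:ℝ) * h) ≤ (2:ℝ)⁻¹ ^ (1:ℝ) :=
          Real.rpow_le_rpow_of_exponent_ge (by norm_num) (by norm_num) hNh
        rw [Real.rpow_one] at e3
        calc u ≤ ((2:ℝ)⁻¹ ^ N) ^ h := e1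
        _ = (2:ℝ)⁻¹ ^ ((N:ℝ) * h) := e2
        _ ≤ 2⁻¹ := e3
        _ = 1/2 := by norm_num
      have hlogb : Real.logb 2 ((Pt tu).dR) = -(M:ℝ) := by
        rw [hdR, Real.logb_pow, Real.logb_inv, Real.logb_self_eq_one (by norm_num)]
        ring
      have hsig : sigma h (Pt tu) = (M:ℝ) * (-Real.logb 2 (1 - u)) := by
        simp only [sigma, hlogb, ← hu_def]
        ring
      calc sigma h (Pt tu) = (M:ℝ) * (-Real.logb 2 (1 - u)) := hsig
      _ ≤ (M:ℝ) * (2 * u / Real.log 2) :=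
          mul_le_mul_of_nonneg_left (neg_logb_le_aux hu0 hu2) (Nat.cast_nonneg _)
      _ ≤ ((N:ℝ) * (B:ℝ)) * (2 * u / Real.log 2) :=
          mul_le_mul_of_nonneg_right hMB (div_nonneg (mul_nonneg zero_le_two hu0) hlog2.le)
      _ = ((N:ℝ) * (B:ℝ)) * (2 * (∏ i, ((tu i).1.dR ^ h)) / Real.log 2) := by
          rw [hprod]
    have husum : ∑ tu : Fin N → {U // U ∈ ℱ}, ∏ i, ((tu i).1.dR ^ h) = s ^ N := by
      have hps := Finset.prod_univ_sum (fun _ : Fin N => (Finset.univ : Finset {U // U ∈ ℱ}))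
        (fun _ U => (U.1.dR ^ h))
      rw [Fintype.piFinset_univ] at hps
      have hinner : (∑ U : {U // U ∈ ℱ}, (U.1.dR ^ h)) = s := by
        rw [hs_def]; exact Finset.sum_coe_sort ℱ (fun U => U.dR ^ h)
      calc ∑ tu : Fin N → {U // U ∈ ℱ}, ∏ i, ((tu i).1.dR ^ h)
          = ∏ _i : Fin N, (∑ U : {U // U ∈ ℱ}, (U.1.dR ^ h)) := hps.symm
      _ = ∏ _i : Fin N, s := Finset.prod_congr rfl fun i _ => hinner
      _ = s ^ N := by simp
    calc (∑' φ : (Set.range Pt : Set (Pattern Γ k)), ENNReal.ofReal (sigma h φ.1))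
        ≤ ∑ tu : Fin N → {U // U ∈ ℱ}, ENNReal.ofReal (sigma h (Pt tu)) := h1
    _ ≤ ∑ tu : Fin N → {U // U ∈ ℱ}, ENNReal.ofReal
          (((N:ℝ) * (B:ℝ)) * (2 * (∏ i, ((tu i).1.dR ^ h)) / Real.log 2)) :=
        Finset.sum_le_sum fun tu _ => ENNReal.ofReal_le_ofReal (hpt tu)
    _ = ENNReal.ofReal (∑ tu : Fin N → {U // U ∈ ℱ},
          ((N:ℝ) * (B:ℝ)) * (2 * (∏ i, ((tu i).1.dR ^ h)) / Real.log 2)) :=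
        (ENNReal.ofReal_sum_of_nonneg fun tu _ => mul_nonneg (by positivity)
          (div_nonneg (mul_nonneg zero_le_two
            (Finset.prod_nonneg fun i _ => Real.rpow_nonneg (dRpos _).le _)) hlog2.le)).symm
    _ = ENNReal.ofReal (2 * (B:ℝ) / Real.log 2 * ((N:ℝ) * s ^ N)) := by
        congr 1
        have hc : ∀ tu : Fin N → {U // U ∈ ℱ},
            ((N:ℝ) * (B:ℝ)) * (2 * (∏ i, ((tu i).1.dR ^ h)) / Real.log 2)
            = (((N:ℝ) * (B:ℝ)) * 2 / Real.log 2) * ∏ i, ((tu i).1.dR ^ h) := fun tu => by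
          ring
        rw [Finset.sum_congr rfl fun tu _ => hc tu, ← Finset.mul_sum, husum]
        ring
    _ < ENNReal.ofReal ε := (ENNReal.ofReal_lt_ofReal_iff hε).2 hNbound
  · intro x hx
    have hxx : ∀ i : Fin N, ∃ U : {U // U ∈ ℱ}, lshift (γ i) x ∈ U.1.cylinder := by
      intro i
      obtain ⟨U, hU, hcyl⟩ := Set.mem_iUnion₂.1 (hx (γ i))
      exact ⟨⟨U, hU⟩, hcyl⟩
    choose tt htt using hxx
    exact Set.mem_iUnion₂.2 ⟨Pt tt, Set.mem_range_self tt, interPat_mem (hdisj tt) htt⟩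
end

section
/- Let Γ be a countably infinite group and X ⊆ k^Γ a subshift of breadth 𝔟(X) > 0, witnessed by an action-cover 𝒰 = {U_φ : φ ∈ Φ} of k^Γ \ X and h > 0 with h + σ_h(𝒰) < log₂ k. Then Forb(Γ·Φ) := k^Γ \ ⋃_{γ∈Γ, φ∈Φ} γ·U_φ is a nonempty subshift contained in X. -/
set_option maxHeartbeats 1000000





open scoped ENNReal

namespace LLLaux

variable {V : Type*} [Fintype V] [DecidableEq V] {A : Type*} [Fintype A] [DecidableEq A]
  [Nonempty A] {ι : Type*} [DecidableEq ι]

/-- `x` matches the constraint `(D, f)`. -/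
def Matches (D : Finset V) (f : V → A) (x : V → A) : Prop := ∀ v ∈ D, x v = f v

instance (D : Finset V) (f : V → A) (x : V → A) : Decidable (Matches D f x) := by
  unfold Matches; infer_instance

variable (D : ι → Finset V) (f : ι → V → A)

/-- Configurations avoiding all constraints in `T`. -/
def C (T : Finset ι) : Finset (V → A) :=
  Finset.univ.filter (fun x => ∀ t ∈ T, ¬ Matches (D t) (f t) x)

lemma C_empty : C D f (∅ : Finset ι) = Finset.univ := by
  simp [C]

lemma C_mono {T₁ T₂ : Finset ι} (h : T₁ ⊆ T₂) : C D f T₂ ⊆ C D f T₁ := by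
  intro x hx
  simp only [C, Finset.mem_filter] at hx ⊢
  exact ⟨hx.1, fun t ht => hx.2 t (h ht)⟩

lemma C_insert (t : ι) (T : Finset ι) :
    C D f (insert t T) = C D f T \ (C D f T).filter (Matches (D t) (f t)) := by
  ext x
  simp only [C, Finset.mem_filter, Finset.mem_sdiff, Finset.mem_insert, Finset.mem_univ,
    true_and]
  constructor
  · intro hx
    exact ⟨fun s hs => hx s (Or.inr hs), fun hc => hx t (Or.inl rfl) hc.2⟩
  · rintro ⟨h1, h2⟩
    rintro s (rfl | hs)
    · exact fun hm => h2 ⟨h1, hm⟩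
    · exact h1 s hs

lemma card_agree (D₀ : Finset V) (y : V → A) :
    (Finset.univ.filter (fun x : V → A => ∀ v ∉ D₀, x v = y v)).card
      = Fintype.card A ^ D₀.card := by
  rw [← Fintype.card_subtype]
  have e : {x : V → A // ∀ v ∉ D₀, x v = y v} ≃ (↥D₀ → A) :=
    { toFun := fun x v => x.1 v.1
      invFun := fun g => ⟨fun v => if h : v ∈ D₀ then g ⟨v, h⟩ else y v,
        fun v hv => by simp [hv]⟩
      left_inv := by
        rintro ⟨x, hx⟩
        ext v
        by_cases h : v ∈ D₀ <;> simp [h]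
        exact (hx v h).symm
      right_inv := by
        intro g
        ext v
        simp }
  rw [Fintype.card_congr e, Fintype.card_fun, Fintype.card_coe]

/-- Key independence counting: if membership in `E` is determined off `D₀`, then the
fraction of `E` matching `(D₀, f₀)` is exactly `|A|^{-|D₀|}`. -/
lemma card_filter_matches_of_determined (E : Finset (V → A)) (D₀ : Finset V) (f₀ : V → A)
    (hE : ∀ x y : V → A, (∀ v ∉ D₀, x v = y v) → x ∈ E → y ∈ E) :
    (E.filter (Matches D₀ f₀)).card * Fintype.card A ^ D₀.card = E.card := by
  classical
  set o : (V → A) → (V → A) := fun x v => if v ∈ D₀ then f₀ v else x v with ho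
  have hmaps : ∀ x ∈ E, o x ∈ E.filter (Matches D₀ f₀) := by
    intro x hx
    refine Finset.mem_filter.mpr ⟨hE x (o x) (fun v hv => by simp [ho, hv]) hx, ?_⟩
    intro v hv
    simp [ho, hv]
  have hsum := Finset.card_eq_sum_card_fiberwise hmaps
  have hfib : ∀ y ∈ E.filter (Matches D₀ f₀),
      (E.filter (fun x => o x = y)).card = Fintype.card A ^ D₀.card := by
    intro y hy
    rw [Finset.mem_filter] at hy
    rw [← card_agree D₀ y]
    congr 1
    ext x
    simp only [Finset.mem_filter, Finset.mem_univ, true_and]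
    constructor
    · rintro ⟨hxE, rfl⟩
      intro v hv
      simp [ho, hv]
    · intro hagree
      have hxE : x ∈ E := hE y x (fun v hv => (hagree v hv).symm) hy.1
      refine ⟨hxE, ?_⟩
      funext v
      by_cases h : v ∈ D₀
      · simp [ho, h, hy.2 v h]
      · simp [ho, h, hagree v h]
  rw [Finset.sum_congr rfl hfib, Finset.sum_const, smul_eq_mul, mul_comm] at hsum
  rw [mul_comm]; exact hsum.symm

variable (ω : ι → ℝ) (S : Finset ι)

/-- Main LLL induction. -/
lemma lll_step (hω1 : ∀ i ∈ S, 0 < ω i) (hω2 : ∀ i ∈ S, ω i < 1)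
    (hcond : ∀ i ∈ S, ((Fintype.card A : ℝ))⁻¹ ^ (D i).card ≤
      ω i * ∏ t ∈ S.filter (fun t => t ≠ i ∧ ((D t) ∩ (D i)).Nonempty), (1 - ω t)) :
    ∀ n : ℕ, ∀ T ⊆ S, T.card ≤ n → ∀ i ∈ S, i ∉ T →
      (((C D f T).filter (Matches (D i) (f i))).card : ℝ) ≤ ω i * (C D f T).card := by
  intro n
  induction n using Nat.strong_induction_on with
  | _ n IH =>
    intro T hTS hTn i hiS hiT
    classical
    set T₁ : Finset ι := T.filter (fun t => ((D t) ∩ (D i)).Nonempty) with hT₁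
    set T₂ : Finset ι := T.filter (fun t => ¬((D t) ∩ (D i)).Nonempty) with hT₂
    have hT12 : T₂ ∪ T₁ = T := by
      rw [hT₁, hT₂, Finset.union_comm, Finset.filter_union_filter_not_eq]
    -- chain inequality
    have chain : ∀ T' ⊆ T₁, (∏ t ∈ T', (1 - ω t)) * ((C D f T₂).card : ℝ)
        ≤ ((C D f (T₂ ∪ T')).card : ℝ) := by
      intro T'
      induction T' using Finset.induction_on with
      | empty => simp
      | @insert t T'' htT'' IH2 =>
        intro hsub
        have htT₁ : t ∈ T₁ := hsub (Finset.mem_insert_self t T'')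
        have hT''sub : T'' ⊆ T₁ := fun s hs => hsub (Finset.mem_insert_of_mem hs)
        have htT : t ∈ T := (Finset.mem_filter.mp htT₁).1
        have htS : t ∈ S := hTS htT
        have ht2 : t ∉ T₂ := by
          intro hc
          exact (Finset.mem_filter.mp hc).2 (Finset.mem_filter.mp htT₁).2
        have htU : t ∉ T₂ ∪ T'' := by
          simp only [Finset.mem_union]
          rintro (hc | hc)
          exacts [ht2 hc, htT'' hc]
        have hUsub : T₂ ∪ T'' ⊆ S := by
          intro s hs
          rcases Finset.mem_union.mp hs with hs | hs
          · exact hTS (Finset.mem_filter.mp hs).1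
          · exact hTS (Finset.mem_filter.mp (hT''sub hs)).1
        have hUcard : (T₂ ∪ T'').card < n := by
          have h1 : T₂ ∪ T'' ⊆ T.erase t := by
            intro s hs
            refine Finset.mem_erase.mpr ⟨fun hst => htU (hst ▸ hs), ?_⟩
            rcases Finset.mem_union.mp hs with hs | hs
            · exact (Finset.mem_filter.mp hs).1
            · exact (Finset.mem_filter.mp (hT''sub hs)).1
          calc (T₂ ∪ T'').card ≤ (T.erase t).card := Finset.card_le_card h1
            _ < T.card := Finset.card_erase_lt_of_mem htT
            _ ≤ n := hTn
        have hkey := IH _ hUcard (T₂ ∪ T'') hUsub le_rfl t htS htU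
        have hins : C D f (insert t (T₂ ∪ T'')) =
            C D f (T₂ ∪ T'') \ (C D f (T₂ ∪ T'')).filter (Matches (D t) (f t)) :=
          C_insert D f t (T₂ ∪ T'')
        have hcards : ((C D f (insert t (T₂ ∪ T''))).card : ℝ) =
            ((C D f (T₂ ∪ T'')).card : ℝ)
              - (((C D f (T₂ ∪ T'')).filter (Matches (D t) (f t))).card : ℝ) := by
          rw [hins, Finset.card_sdiff_of_subset (Finset.filter_subset _ _)]
          have := Finset.card_filter_le (C D f (T₂ ∪ T'')) (Matches (D t) (f t))
          push_cast [Nat.cast_sub this]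
          ring
        have hUeq : T₂ ∪ insert t T'' = insert t (T₂ ∪ T'') := by
          ext s; simp only [Finset.mem_union, Finset.mem_insert]; tauto
        rw [hUeq, Finset.prod_insert htT'', hcards]
        have hIH2 := IH2 hT''sub
        have hω1t := hω1 t htS
        have hω2t := hω2 t htS
        have hprodnn : (0:ℝ) ≤ ∏ s ∈ T'', (1 - ω s) :=
          Finset.prod_nonneg (fun s hs =>
            sub_nonneg.mpr (le_of_lt (hω2 s (hTS ((Finset.mem_filter.mp (hT''sub hs)).1)))))
        have hcnn : (0:ℝ) ≤ ((C D f (T₂ ∪ T'')).card : ℝ) := Nat.cast_nonneg _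
        nlinarith
    -- assemble
    have hchainT : (∏ t ∈ T₁, (1 - ω t)) * ((C D f T₂).card : ℝ) ≤ ((C D f T).card : ℝ) := by
      have := chain T₁ (Finset.Subset.refl _)
      rwa [hT12] at this
    have hdet : (((C D f T₂).filter (Matches (D i) (f i))).card : ℝ) * (Fintype.card A : ℝ) ^ (D i).card
        = ((C D f T₂).card : ℝ) := by
      have := card_filter_matches_of_determined (C D f T₂) (D i) (f i) ?_
      · exact_mod_cast congrArg (Nat.cast : ℕ → ℝ) this
      · intro x y hagree hx
        simp only [C, Finset.mem_filter, Finset.mem_univ, true_and] at hx ⊢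
        intro t ht hmy
        refine hx t ht ?_
        intro v hv
        have hvDi : v ∉ D i := by
          intro hc
          exact (Finset.mem_filter.mp ht).2 ⟨v, Finset.mem_inter.mpr ⟨hv, hc⟩⟩
        rw [hagree v hvDi]
        exact hmy v hv
    have hApos : (0:ℝ) < (Fintype.card A : ℝ) := by exact_mod_cast Fintype.card_pos
    have hdet' : (((C D f T₂).filter (Matches (D i) (f i))).card : ℝ)
        = ((C D f T₂).card : ℝ) * ((Fintype.card A : ℝ))⁻¹ ^ (D i).card := by
      rw [← hdet, inv_pow, mul_assoc, mul_inv_cancel₀ (by positivity), mul_one]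
    have hsub12 : T₂ ⊆ T := Finset.filter_subset _ _
    have hmono : (((C D f T).filter (Matches (D i) (f i))).card : ℝ)
        ≤ (((C D f T₂).filter (Matches (D i) (f i))).card : ℝ) := by
      exact_mod_cast Finset.card_le_card
        (Finset.filter_subset_filter _ (C_mono D f hsub12))
    set N : Finset ι := S.filter (fun t => t ≠ i ∧ ((D t) ∩ (D i)).Nonempty) with hN
    have hT₁N : T₁ ⊆ N := by
      intro t ht
      have htT := (Finset.mem_filter.mp ht).1
      refine Finset.mem_filter.mpr ⟨hTS htT, fun hti => hiT (hti ▸ htT),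
        (Finset.mem_filter.mp ht).2⟩
    have hprodN : ∏ t ∈ N, (1 - ω t) ≤ ∏ t ∈ T₁, (1 - ω t) := by
      rw [← Finset.prod_sdiff hT₁N]
      have h1 : ∏ t ∈ N \ T₁, (1 - ω t) ≤ 1 :=
        Finset.prod_le_one
          (fun t ht => sub_nonneg.mpr
            (le_of_lt (hω2 t (Finset.mem_filter.mp (Finset.mem_sdiff.mp ht).1).1)))
          (fun t ht => by
            have := hω1 t ((Finset.mem_filter.mp (Finset.mem_sdiff.mp ht).1).1)
            linarith)
      have h2 : (0:ℝ) ≤ ∏ t ∈ T₁, (1 - ω t) :=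
        Finset.prod_nonneg (fun t ht => sub_nonneg.mpr
          (le_of_lt (hω2 t (hTS (Finset.mem_filter.mp ht).1))))
      nlinarith
    have hc2nn : (0:ℝ) ≤ ((C D f T₂).card : ℝ) := Nat.cast_nonneg _
    have hωinn : (0:ℝ) ≤ ω i := le_of_lt (hω1 i hiS)
    calc (((C D f T).filter (Matches (D i) (f i))).card : ℝ)
        ≤ (((C D f T₂).filter (Matches (D i) (f i))).card : ℝ) := hmono
      _ = ((C D f T₂).card : ℝ) * ((Fintype.card A : ℝ))⁻¹ ^ (D i).card := hdet'
      _ ≤ ((C D f T₂).card : ℝ) * (ω i * ∏ t ∈ N, (1 - ω t)) :=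
          mul_le_mul_of_nonneg_left (hcond i hiS) hc2nn
      _ ≤ ((C D f T₂).card : ℝ) * (ω i * ∏ t ∈ T₁, (1 - ω t)) := by
          apply mul_le_mul_of_nonneg_left _ hc2nn
          exact mul_le_mul_of_nonneg_left hprodN hωinn
      _ = ω i * ((∏ t ∈ T₁, (1 - ω t)) * ((C D f T₂).card : ℝ)) := by ring
      _ ≤ ω i * ((C D f T).card : ℝ) := mul_le_mul_of_nonneg_left hchainT hωinn

/-- Finite Lovász Local Lemma, counting version. -/
theorem lll_exists (hω1 : ∀ i ∈ S, 0 < ω i) (hω2 : ∀ i ∈ S, ω i < 1)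
    (hcond : ∀ i ∈ S, ((Fintype.card A : ℝ))⁻¹ ^ (D i).card ≤
      ω i * ∏ t ∈ S.filter (fun t => t ≠ i ∧ ((D t) ∩ (D i)).Nonempty), (1 - ω t)) :
    ∃ x : V → A, ∀ i ∈ S, ¬ Matches (D i) (f i) x := by
  classical
  have key : ∀ T ⊆ S, 0 < (C D f T).card := by
    intro T
    induction T using Finset.induction_on with
    | empty =>
      intro _
      rw [C_empty]
      simp only [Finset.card_univ]
      exact Fintype.card_pos
    | @insert t T htT IHT =>
      intro hsub
      have htS : t ∈ S := hsub (Finset.mem_insert_self t T)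
      have hTsub : T ⊆ S := fun s hs => hsub (Finset.mem_insert_of_mem hs)
      have hpos := IHT hTsub
      have hstep := lll_step D f ω S hω1 hω2 hcond T.card T hTsub le_rfl t htS htT
      have hcards : ((C D f (insert t T)).card : ℝ) =
          ((C D f T).card : ℝ) - (((C D f T).filter (Matches (D t) (f t))).card : ℝ) := by
        rw [C_insert, Finset.card_sdiff_of_subset (Finset.filter_subset _ _)]
        have := Finset.card_filter_le (C D f T) (Matches (D t) (f t))
        push_cast [Nat.cast_sub this]
        ring
      have h2t := hω2 t htS
      have : (0:ℝ) < ((C D f (insert t T)).card : ℝ) := by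
        rw [hcards]
        have hposR : (0:ℝ) < ((C D f T).card : ℝ) := by exact_mod_cast hpos
        nlinarith
      exact_mod_cast this
  obtain ⟨x, hx⟩ := Finset.card_pos.mp (key S (Finset.Subset.refl _))
  simp only [C, Finset.mem_filter, Finset.mem_univ, true_and] at hx
  exact ⟨x, hx⟩

end LLLaux


section Aux

open Finset

lemma Pattern.isOpen_cylinder {Γ : Type*} {k : ℕ} (φ : Pattern Γ k) :
    IsOpen φ.cylinder := by
  have : φ.cylinder = ⋂ g ∈ (φ.dom : Set Γ),
      (fun x : Γ → Fin k => x g) ⁻¹' {φ.val g} := by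
    ext x; simp [Pattern.cylinder]
  rw [this]
  exact (φ.dom.finite_toSet).isOpen_biInter fun g _ =>
    (continuous_apply g).isOpen_preimage _ (isOpen_discrete _)

lemma sigma_eq {Γ : Type*} {k : ℕ} (h : ℝ) (φ : Pattern Γ k) :
    sigma h φ = (-(φ.dom.card : ℝ)) * Real.logb 2 (1 - (2:ℝ) ^ (-(h * φ.dom.card))) := by
  have hdR : φ.dR = (2:ℝ) ^ (-(φ.dom.card : ℝ)) := by
    rw [Pattern.dR, ← Real.rpow_natCast (2:ℝ)⁻¹ φ.dom.card,
      ← Real.rpow_neg_one (2:ℝ), ← Real.rpow_mul (by norm_num)]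
    norm_num
  have h1 : Real.logb 2 φ.dR = -(φ.dom.card : ℝ) := by
    rw [hdR, Real.logb_rpow (by norm_num)]
    all_goals norm_num
  have h2 : φ.dR ^ h = (2:ℝ) ^ (-(h * φ.dom.card)) := by
    rw [hdR, ← Real.rpow_mul (by norm_num)]
    ring_nf
  rw [sigma, h1, h2]

lemma sigma_nonneg {Γ : Type*} {k : ℕ} {h : ℝ} (hh : 0 ≤ h) (φ : Pattern Γ k) :
    0 ≤ sigma h φ := by
  have hdR0 : 0 < φ.dR := by
    rw [Pattern.dR]; positivity
  have hdR1 : φ.dR ≤ 1 := by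
    rw [Pattern.dR]
    exact pow_le_one₀ (by norm_num) (by norm_num)
  have h1 : Real.logb 2 φ.dR ≤ 0 := Real.logb_nonpos one_lt_two hdR0.le hdR1
  have h2 : Real.logb 2 (1 - φ.dR ^ h) ≤ 0 := by
    refine Real.logb_nonpos one_lt_two ?_ ?_
    · have : φ.dR ^ h ≤ 1 := Real.rpow_le_one hdR0.le hdR1 hh
      linarith
    · have : (0:ℝ) ≤ φ.dR ^ h := Real.rpow_nonneg hdR0.le h
      linarith
  unfold sigma
  nlinarith

/-- The key numeric inequality for verifying the LLL condition. -/
lemma lll_numeric {k : ℕ} (hk : 2 ≤ k) {h : ℝ} (hh : 0 < h) {α : Type*} (Ψ : Finset α)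
    (m : α → ℕ) (hm : ∀ ψ ∈ Ψ, 1 ≤ m ψ) (n : ℕ) (hn : 1 ≤ n)
    (hH : h + ∑ ψ ∈ Ψ, (-(m ψ : ℝ)) * Real.logb 2 (1 - (2:ℝ) ^ (-(h * m ψ)))
      ≤ Real.logb 2 k) :
    ((k:ℝ))⁻¹ ^ n ≤ (2:ℝ) ^ (-(h * n)) * ∏ ψ ∈ Ψ, (1 - (2:ℝ) ^ (-(h * m ψ))) ^ (n * m ψ) := by
  have hkpos : (0:ℝ) < k := by positivity
  set ε : α → ℝ := fun ψ => (2:ℝ) ^ (-(h * m ψ)) with hε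
  have hε0 : ∀ ψ, 0 < ε ψ := fun ψ => Real.rpow_pos_of_pos (by norm_num) _
  have hε1 : ∀ ψ ∈ Ψ, ε ψ < 1 := by
    intro ψ hψ
    refine Real.rpow_lt_one_of_one_lt_of_neg one_lt_two ?_
    have : (1:ℝ) ≤ (m ψ : ℝ) := by exact_mod_cast hm ψ hψ
    nlinarith
  have hfacpos : ∀ ψ ∈ Ψ, (0:ℝ) < 1 - ε ψ := fun ψ hψ => by
    have := hε1 ψ hψ; linarith
  have hLpos : (0:ℝ) < ((k:ℝ))⁻¹ ^ n := by positivity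
  have hprodpos : (0:ℝ) < ∏ ψ ∈ Ψ, (1 - ε ψ) ^ (n * m ψ) :=
    Finset.prod_pos fun ψ hψ => pow_pos (hfacpos ψ hψ) _
  have hRpos : (0:ℝ) < (2:ℝ) ^ (-(h * n)) * ∏ ψ ∈ Ψ, (1 - ε ψ) ^ (n * m ψ) := by
    have : (0:ℝ) < (2:ℝ) ^ (-(h * (n:ℝ))) := Real.rpow_pos_of_pos (by norm_num) _
    exact mul_pos this hprodpos
  rw [← Real.log_le_log_iff hLpos hRpos]
  have hlog2 : (0:ℝ) < Real.log 2 := Real.log_pos one_lt_two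
  -- rewrite the logs
  have hlogL : Real.log (((k:ℝ))⁻¹ ^ n) = -((n:ℝ) * Real.log k) := by
    rw [Real.log_pow, Real.log_inv]; ring
  have hlogR : Real.log ((2:ℝ) ^ (-(h * n)) * ∏ ψ ∈ Ψ, (1 - ε ψ) ^ (n * m ψ))
      = (-(h * n)) * Real.log 2 + ∑ ψ ∈ Ψ, ((n * m ψ : ℕ) : ℝ) * Real.log (1 - ε ψ) := by
    rw [Real.log_mul (by positivity) (ne_of_gt hprodpos), Real.log_rpow (by norm_num),
      Real.log_prod (fun ψ hψ => ne_of_gt (pow_pos (hfacpos ψ hψ) _))]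
    congr 1
    exact Finset.sum_congr rfl fun ψ hψ => Real.log_pow _ _
  rw [hlogL, hlogR]
  -- derive the key linear inequality from hH
  have key : h * Real.log 2 + ∑ ψ ∈ Ψ, (-(m ψ : ℝ)) * Real.log (1 - ε ψ)
      ≤ Real.log k := by
    have h2 := mul_le_mul_of_nonneg_right hH hlog2.le
    rw [Real.logb, div_mul_cancel₀ _ (ne_of_gt hlog2), add_mul, Finset.sum_mul] at h2
    have hcong : ∀ ψ ∈ Ψ, (-(m ψ : ℝ)) * Real.logb 2 (1 - ε ψ) * Real.log 2
        = (-(m ψ : ℝ)) * Real.log (1 - ε ψ) := by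
      intro ψ hψ
      rw [Real.logb]
      field_simp
    rw [Finset.sum_congr rfl hcong] at h2
    exact h2
  have keyn := mul_le_mul_of_nonneg_left key (by positivity : (0:ℝ) ≤ (n:ℝ))
  rw [mul_add, Finset.mul_sum] at keyn
  have hsums : ∑ ψ ∈ Ψ, (n:ℝ) * ((-(m ψ : ℝ)) * Real.log (1 - ε ψ))
      = -∑ ψ ∈ Ψ, ((n * m ψ : ℕ) : ℝ) * Real.log (1 - ε ψ) := by
    rw [← Finset.sum_neg_distrib]
    refine Finset.sum_congr rfl fun ψ hψ => ?_
    push_cast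
    ring
  rw [hsums] at keyn
  -- now linear arithmetic
  nlinarith [keyn]

end Aux

/-- Let `X ⊆ k^Γ` be a subshift whose positive breadth is witnessed by an action-cover
`𝒰 = {U_φ : φ ∈ Φ}` of `k^Γ \ X` and `h > 0` with `h + σ_h(𝒰) < log₂ k`. Then
`Forb(Γ·Φ) = k^Γ \ ⋃_{γ ∈ Γ, φ ∈ Φ} γ·U_φ` is a nonempty subshift contained in `X`. -/
theorem forb_nonempty_subshift_of_breadth_witness
    {Γ : Type*} [Group Γ] [DecidableEq Γ] [Countable Γ] [Infinite Γ] {k : ℕ} (hk : 2 ≤ k)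
    {X : Set (Γ → Fin k)} (hcl : IsClosed X) (hinv : ShiftInvariant X)
    (Φ : Set (Pattern Γ k))
    (hcover : Set.univ \ X ⊆ ⋃ γ : Γ, ⋃ φ ∈ Φ, (patShift γ φ).cylinder)
    (h : ℝ) (hh : 0 < h)
    (hb : ENNReal.ofReal h + ∑' φ : Φ, ENNReal.ofReal (sigma h φ.1) <
      ENNReal.ofReal (Real.logb 2 k)) :
    (Set.univ \ ⋃ γ : Γ, ⋃ φ ∈ Φ, (patShift γ φ).cylinder).Nonempty ∧
    IsClosed (Set.univ \ ⋃ γ : Γ, ⋃ φ ∈ Φ, (patShift γ φ).cylinder) ∧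
    ShiftInvariant (Set.univ \ ⋃ γ : Γ, ⋃ φ ∈ Φ, (patShift γ φ).cylinder) ∧
    (Set.univ \ ⋃ γ : Γ, ⋃ φ ∈ Φ, (patShift γ φ).cylinder) ⊆ X := by
  classical
  set U : Set (Γ → Fin k) := ⋃ γ : Γ, ⋃ φ ∈ Φ, (patShift γ φ).cylinder with hU
  have hUopen : IsOpen U := by
    refine isOpen_iUnion fun γ => isOpen_iUnion fun φ => isOpen_iUnion fun _ => ?_
    exact Pattern.isOpen_cylinder _
  have hclosed : IsClosed (Set.univ \ U) := by
    rw [← Set.compl_eq_univ_diff]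
    exact hUopen.isClosed_compl
  have hshift : ShiftInvariant (Set.univ \ U) := by
    intro γ x hx
    refine ⟨Set.mem_univ _, ?_⟩
    intro hmem
    apply hx.2
    simp only [hU, Set.mem_iUnion] at hmem ⊢
    obtain ⟨δ, φ, hφ, hcyl⟩ := hmem
    refine ⟨γ⁻¹ * δ, φ, hφ, ?_⟩
    intro g hg
    simp only [patShift, Finset.mem_image] at hg
    obtain ⟨d, hd, rfl⟩ := hg
    have h1 := hcyl (d * δ⁻¹) (by
      simp only [patShift, Finset.mem_image]
      exact ⟨d, hd, rfl⟩)
    simp only [patShift, lshift] at h1 ⊢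
    have e1 : d * (γ⁻¹ * δ)⁻¹ * (γ⁻¹ * δ) = d := by group
    have e2 : d * (γ⁻¹ * δ)⁻¹ = d * δ⁻¹ * γ := by group
    have e3 : d * δ⁻¹ * δ = d := by group
    rw [e1, e2]
    rw [e3] at h1
    exact h1
  have hsubX : (Set.univ \ U) ⊆ X := by
    intro x hx
    by_contra hxX
    exact hx.2 (hcover ⟨Set.mem_univ _, hxX⟩)
  refine ⟨?_, hclosed, hshift, hsubX⟩
  -- Nonemptiness via compactness + LLL
  haveI : Nonempty (Fin k) := ⟨⟨0, by omega⟩⟩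
  set pat : Γ × ↥Φ → Pattern Γ k := fun i => patShift i.1 i.2.1 with hpat
  have hpatcard : ∀ i : Γ × ↥Φ, (pat i).dom.card = i.2.1.dom.card := by
    intro i
    exact Finset.card_image_of_injective _ (mul_left_injective _)
  have hdompos : ∀ i : Γ × ↥Φ, 1 ≤ i.2.1.dom.card :=
    fun i => Finset.card_pos.mpr i.2.1.dom_nonempty
  -- the real inequality from hb
  have hreal : ∀ Ψ : Finset ↥Φ, h + ∑ ψ ∈ Ψ, sigma h ψ.1 < Real.logb 2 k := by
    intro Ψ
    have hsle : ∑ ψ ∈ Ψ, ENNReal.ofReal (sigma h ψ.1)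
        ≤ ∑' φ : Φ, ENNReal.ofReal (sigma h φ.1) := ENNReal.sum_le_tsum Ψ
    have hlt : ENNReal.ofReal h + ∑ ψ ∈ Ψ, ENNReal.ofReal (sigma h ψ.1)
        < ENNReal.ofReal (Real.logb 2 k) :=
      lt_of_le_of_lt (add_le_add le_rfl hsle) hb
    rw [← ENNReal.ofReal_sum_of_nonneg (fun ψ _ => sigma_nonneg hh.le ψ.1),
      ← ENNReal.ofReal_add hh.le (Finset.sum_nonneg fun ψ _ => sigma_nonneg hh.le ψ.1)] at hlt
    exact (ENNReal.ofReal_lt_ofReal_iff_of_nonneg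
      (add_nonneg hh.le (Finset.sum_nonneg fun ψ _ => sigma_nonneg hh.le ψ.1))).mp hlt
  -- the finite avoidance claim
  have claim : ∀ u : Finset (Γ × ↥Φ), ∃ x : Γ → Fin k, ∀ i ∈ u, x ∉ (pat i).cylinder := by
    intro u
    set W : Finset Γ := u.biUnion (fun i => (pat i).dom) with hW
    have hWsub : ∀ i ∈ u, (pat i).dom ⊆ W :=
      fun i hi g hg => Finset.mem_biUnion.mpr ⟨i, hi, hg⟩
    set D : Γ × ↥Φ → Finset ↥W := fun i =>
      (pat i).dom.preimage Subtype.val (Set.injOn_of_injective Subtype.val_injective) with hD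
    set f : Γ × ↥Φ → ↥W → Fin k := fun i v => (pat i).val v.1 with hf
    set ω : Γ × ↥Φ → ℝ := fun i => (2:ℝ) ^ (-(h * i.2.1.dom.card)) with hω
    have hmemD : ∀ i (v : ↥W), v ∈ D i ↔ v.1 ∈ (pat i).dom := by
      intro i v
      rw [hD, Finset.mem_preimage]
    have hDcard : ∀ i ∈ u, (D i).card = i.2.1.dom.card := by
      intro i hi
      rw [← hpatcard i, ← Finset.card_image_of_injective (D i) Subtype.val_injective]
      congr 1
      ext g
      simp only [Finset.mem_image]
      constructor
      · rintro ⟨v, hv, rfl⟩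
        exact (hmemD i v).mp hv
      · intro hg
        exact ⟨⟨g, hWsub i hi hg⟩, (hmemD i _).mpr hg, rfl⟩
    have hω1 : ∀ i ∈ u, 0 < ω i := fun i _ => Real.rpow_pos_of_pos (by norm_num) _
    have hω2 : ∀ i ∈ u, ω i < 1 := by
      intro i _
      refine Real.rpow_lt_one_of_one_lt_of_neg one_lt_two ?_
      have : (1:ℝ) ≤ (i.2.1.dom.card : ℝ) := by exact_mod_cast hdompos i
      nlinarith
    have hcond : ∀ i ∈ u, ((Fintype.card (Fin k) : ℝ))⁻¹ ^ (D i).card ≤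
        ω i * ∏ t ∈ u.filter (fun t => t ≠ i ∧ ((D t) ∩ (D i)).Nonempty), (1 - ω t) := by
      intro i hi
      set N : Finset (Γ × ↥Φ) := u.filter (fun t => t ≠ i ∧ ((D t) ∩ (D i)).Nonempty) with hN
      set Ψ : Finset ↥Φ := u.image Prod.snd with hΨ
      set n : ℕ := i.2.1.dom.card with hn
      set m : ↥Φ → ℕ := fun ψ => ψ.1.dom.card with hm
      -- group the product over N by the pattern
      have hfiber : ∏ ψ ∈ Ψ, ∏ t ∈ N.filter (fun t => t.2 = ψ), (1 - ω t)
          = ∏ t ∈ N, (1 - ω t) := by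
        refine Finset.prod_fiberwise_of_maps_to ?_ _
        intro t ht
        exact Finset.mem_image.mpr ⟨t, (Finset.mem_filter.mp ht).1, rfl⟩
      have hinner : ∀ ψ ∈ Ψ, ∏ t ∈ N.filter (fun t => t.2 = ψ), (1 - ω t)
          = (1 - (2:ℝ) ^ (-(h * m ψ))) ^ (N.filter (fun t => t.2 = ψ)).card := by
        intro ψ _
        rw [← Finset.prod_const]
        refine Finset.prod_congr rfl fun t ht => ?_
        have ht2 : t.2 = ψ := (Finset.mem_filter.mp ht).2
        simp only [hω, ht2, hm]
      have hcount : ∀ ψ ∈ Ψ, (N.filter (fun t => t.2 = ψ)).card ≤ n * m ψ := by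
        intro ψ _
        have hinj : Set.InjOn Prod.fst ((N.filter (fun t => t.2 = ψ)) : Set (Γ × ↥Φ)) := by
          intro t₁ ht₁ t₂ ht₂ heq
          have h1 : t₁.2 = ψ := (Finset.mem_filter.mp ht₁).2
          have h2 : t₂.2 = ψ := (Finset.mem_filter.mp ht₂).2
          exact Prod.ext heq (h1.trans h2.symm)
        have hmaps : ∀ t ∈ N.filter (fun t => t.2 = ψ),
            t.1 ∈ ((pat i).dom ×ˢ ψ.1.dom).image (fun p => p.1⁻¹ * p.2) := by
          intro t ht
          have htN : t ∈ N := Finset.mem_filter.mp ht |>.1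
          have ht2 : t.2 = ψ := (Finset.mem_filter.mp ht).2
          obtain ⟨v, hv⟩ := (Finset.mem_filter.mp htN).2.2
          rw [Finset.mem_inter] at hv
          have hvt : v.1 ∈ (pat t).dom := (hmemD t v).mp hv.1
          have hvi : v.1 ∈ (pat i).dom := (hmemD i v).mp hv.2
          simp only [hpat, patShift, Finset.mem_image] at hvt
          obtain ⟨a, ha, hav⟩ := hvt
          refine Finset.mem_image.mpr ⟨(v.1, a), Finset.mem_product.mpr ⟨hvi, ?_⟩, ?_⟩
          · rw [← ht2]; exact ha
          · simp only
            rw [← hav]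
            group
        calc (N.filter (fun t => t.2 = ψ)).card
            ≤ (((pat i).dom ×ˢ ψ.1.dom).image (fun p => p.1⁻¹ * p.2)).card :=
              Finset.card_le_card_of_injOn Prod.fst hmaps hinj
          _ ≤ ((pat i).dom ×ˢ ψ.1.dom).card := Finset.card_image_le
          _ = n * m ψ := by rw [Finset.card_product, hpatcard i]
      have hεlt1 : ∀ ψ : ↥Φ, (2:ℝ) ^ (-(h * m ψ)) < 1 := by
        intro ψ
        refine Real.rpow_lt_one_of_one_lt_of_neg one_lt_two ?_
        have h1 : (1:ℝ) ≤ (m ψ : ℝ) := by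
          exact_mod_cast Finset.card_pos.mpr ψ.1.dom_nonempty
        nlinarith
      have hεpos : ∀ ψ : ↥Φ, (0:ℝ) < (2:ℝ) ^ (-(h * m ψ)) :=
        fun ψ => Real.rpow_pos_of_pos (by norm_num) _
      have hprod_ge : ∏ ψ ∈ Ψ, (1 - (2:ℝ) ^ (-(h * m ψ))) ^ (n * m ψ)
          ≤ ∏ t ∈ N, (1 - ω t) := by
        rw [← hfiber]
        refine Finset.prod_le_prod ?_ ?_
        · intro ψ _
          exact pow_nonneg (by have := hεlt1 ψ; linarith) _
        · intro ψ hψ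
          rw [hinner ψ hψ]
          exact pow_le_pow_of_le_one (by have := hεlt1 ψ; linarith)
            (by have := hεpos ψ; linarith) (hcount ψ hψ)
      have hnum : ((k:ℝ))⁻¹ ^ n ≤ (2:ℝ) ^ (-(h * n))
          * ∏ ψ ∈ Ψ, (1 - (2:ℝ) ^ (-(h * m ψ))) ^ (n * m ψ) := by
        refine lll_numeric hk hh Ψ m
          (fun ψ _ => Finset.card_pos.mpr ψ.1.dom_nonempty) n (hdompos i) ?_
        have := hreal Ψ
        have hcong : ∑ ψ ∈ Ψ, sigma h ψ.1
            = ∑ ψ ∈ Ψ, (-(m ψ : ℝ)) * Real.logb 2 (1 - (2:ℝ) ^ (-(h * m ψ))) :=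
          Finset.sum_congr rfl fun ψ _ => sigma_eq h ψ.1
        rw [hcong] at this
        exact this.le
      rw [Fintype.card_fin, hDcard i hi, ← hn]
      calc ((k:ℝ))⁻¹ ^ n
          ≤ (2:ℝ) ^ (-(h * n)) * ∏ ψ ∈ Ψ, (1 - (2:ℝ) ^ (-(h * m ψ))) ^ (n * m ψ) := hnum
        _ ≤ ω i * ∏ t ∈ N, (1 - ω t) := by
            refine mul_le_mul_of_nonneg_left hprod_ge ?_
            exact (Real.rpow_pos_of_pos (by norm_num) _).le
    obtain ⟨y, hy⟩ := LLLaux.lll_exists D f ω u hω1 hω2 hcond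
    refine ⟨fun g => if hg : g ∈ W then y ⟨g, hg⟩ else ⟨0, by omega⟩, ?_⟩
    intro i hi hmem
    refine hy i hi ?_
    intro v hv
    have hvdom : v.1 ∈ (pat i).dom := (hmemD i v).mp hv
    have := hmem v.1 hvdom
    simp only [v.2, dif_pos] at this
    rw [hf]
    convert this using 2
  -- compactness
  have hne : (Set.univ ∩ ⋂ i : Γ × ↥Φ, ((pat i).cylinder)ᶜ).Nonempty := by
    by_contra hemp
    rw [Set.not_nonempty_iff_eq_empty] at hemp
    obtain ⟨u, hu⟩ := isCompact_univ.elim_finite_subfamily_closed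
      (fun i : Γ × ↥Φ => ((pat i).cylinder)ᶜ)
      (fun i => (Pattern.isOpen_cylinder (pat i)).isClosed_compl) hemp
    obtain ⟨x, hx⟩ := claim u
    rw [Set.eq_empty_iff_forall_notMem] at hu
    refine hu x ⟨Set.mem_univ _, ?_⟩
    simp only [Set.mem_iInter, Set.mem_compl_iff]
    intro i hi
    exact hx i hi
  obtain ⟨x, -, hx⟩ := hne
  refine ⟨x, Set.mem_univ _, ?_⟩
  simp only [hU, Set.mem_iUnion]
  rintro ⟨γ, φ, hφ, hcyl⟩
  exact (Set.mem_iInter.mp hx (γ, ⟨φ, hφ⟩)) hcyl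
end
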